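/- arXiv:2509.13014 — 7 statements merged into one kernel-verified Lean document; each statement's English description precedes it below -/
import Mathlib

section
/- Let d ≥ 1 be an integer, 1 < α₀ < ϑ₀ < 2, c₂ ≥ 1, and κ, η > 0. There exists a constant C ≥ 1, depending only on d, α₀, ϑ₀ and c₂, such that for every α ∈ [α₀, ϑ₀], every pair of invertible real d×d matrices A, B satisfying c₂^{−1}·‖v‖² ≤ ‖Av‖² ≤ c₂·‖v‖² and c₂^{−1}·‖v‖² ≤ ‖Bv‖² ≤ c₂·‖v‖² for all v ∈ ℝ^d, every pair of points x, y ∈ ℝ^d with x ≠ y, and every m ∈ [0,1]: ∫_{ℝ^d} ‖z‖^m·( q_Ψ(z) + q_{Ψ⁻¹}(z) ) dz ≤ C·( min(‖x−y‖, κ) )^{m−α}. -/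
/-!
Put `δ = min ‖x - y‖ κ`, `s = √c₂` and `r = δ / (2s)`. The maps `A`, `B`, `A⁻¹`, `B⁻¹` stretch
lengths by at most `s`, so `|det (A⁻¹B)|, |det (B⁻¹A)| ≤ c₂^d`, and since `‖(x - y)_κ‖ = δ`, both
`Ψ` and `Ψ⁻¹` map the ball `‖z‖ ≤ r` into `‖w‖ ≥ r`. On that ball the second entry of each minimum
is therefore at most `c_{d,α} c₂^d r^{-(d+α)}`; outside it the first entry is at most
`c_{d,α} ‖z‖^{-(d+α)}`. The integrand is thus dominated by a radial function whose integral, in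
polar coordinates, is a multiple of `r^{m-α} ((d+m)⁻¹ + (α-m)⁻¹) ≤ 4 c₂ δ^{m-α} (1 + (α₀-1)⁻¹)`.
Finally `c_{d,α}` is bounded for `α` in the compact interval `[α₀, ϑ₀] ⊂ (0, 2)`.
-/

open Real MeasureTheory

/-- The constant `c_{d,α} = α·2^(α−2)·Γ((d+α)/2) / (π^(d/2)·Γ((2−α)/2))`. -/
noncomputable def stableConst (d : ℕ) (α : ℝ) : ℝ :=
  α * (2 : ℝ) ^ (α - 2) * Real.Gamma ((d + α) / 2) /
    (Real.pi ^ ((d : ℝ) / 2) * Real.Gamma ((2 - α) / 2))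

/-- The radial truncation `(w)_κ = (min(κ,‖w‖)/‖w‖)·w`. -/
noncomputable def truncVec {d : ℕ} (κ : ℝ) (w : EuclideanSpace ℝ (Fin d)) :
    EuclideanSpace ℝ (Fin d) :=
  (min κ ‖w‖ / ‖w‖) • w

/-- The map `Ψ(z) = B⁻¹(Az + (x−y)_κ)`. -/
noncomputable def psiMap {d : ℕ} (κ : ℝ) (A B : Matrix (Fin d) (Fin d) ℝ)
    (x y : EuclideanSpace ℝ (Fin d)) (z : EuclideanSpace ℝ (Fin d)) :
    EuclideanSpace ℝ (Fin d) :=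
  Matrix.toEuclideanLin B⁻¹ (Matrix.toEuclideanLin A z + truncVec κ (x - y))

/-- The inverse map `Ψ⁻¹(z) = A⁻¹(Bz − (x−y)_κ)`. -/
noncomputable def psiInvMap {d : ℕ} (κ : ℝ) (A B : Matrix (Fin d) (Fin d) ℝ)
    (x y : EuclideanSpace ℝ (Fin d)) (z : EuclideanSpace ℝ (Fin d)) :
    EuclideanSpace ℝ (Fin d) :=
  Matrix.toEuclideanLin A⁻¹ (Matrix.toEuclideanLin B z - truncVec κ (x - y))

/-- The density
`min( 𝟙_{0<‖z‖≤η}·c_{d,α}·‖z‖^{−(d+α)},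
      𝟙_{0<‖Φ(z)‖≤η}·c_{d,α}·detfac·‖Φ(z)‖^{−(d+α)} )`. -/
noncomputable def couplingDensity {d : ℕ} (α η detfac : ℝ)
    (Φ : EuclideanSpace ℝ (Fin d) → EuclideanSpace ℝ (Fin d))
    (z : EuclideanSpace ℝ (Fin d)) : ℝ :=
  min (if 0 < ‖z‖ ∧ ‖z‖ ≤ η then stableConst d α * ‖z‖ ^ (-((d : ℝ) + α)) else 0)
      (if 0 < ‖Φ z‖ ∧ ‖Φ z‖ ≤ η then
          stableConst d α * detfac * ‖Φ z‖ ^ (-((d : ℝ) + α)) else 0)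

open Set Metric Module Matrix

noncomputable def brokenPower (r a b t : ℝ) : ℝ :=
  if t ≤ r then t ^ a else r ^ (a - b) * t ^ b

section BrokenPower

variable {r a b : ℝ}

lemma pow_mul_brokenPower {t : ℝ} (ht : 0 < t) (k : ℕ) :
    t ^ k * brokenPower r a b t = brokenPower r (a + k) (b + k) t := by
  unfold brokenPower
  rw [← Real.rpow_natCast]
  split_ifs
  · rw [Real.rpow_add ht]; ring
  · rw [Real.rpow_add ht, add_sub_add_right_eq_sub]; ring

lemma brokenPower_eqOn_Ioc : EqOn (brokenPower r a b) (fun t ↦ t ^ a) (Ioc 0 r) :=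
  fun _ ht ↦ if_pos ht.2

lemma brokenPower_eqOn_Ioi : EqOn (brokenPower r a b) (fun t ↦ r ^ (a - b) * t ^ b) (Ioi r) :=
  fun _ ht ↦ if_neg (not_le.mpr ht)

lemma integrableOn_Ioc_brokenPower (hr : 0 < r) (ha : -1 < a) :
    IntegrableOn (brokenPower r a b) (Ioc 0 r) :=
  IntegrableOn.congr_fun
    ((intervalIntegrable_iff_integrableOn_Ioc_of_le hr.le).mp
      (intervalIntegral.intervalIntegrable_rpow' ha))
    brokenPower_eqOn_Ioc.symm measurableSet_Ioc

lemma integrableOn_Ioi_brokenPower (hr : 0 < r) (hb : b < -1) :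
    IntegrableOn (brokenPower r a b) (Ioi r) :=
  IntegrableOn.congr_fun ((integrableOn_Ioi_rpow_of_lt hb hr).const_mul _)
    brokenPower_eqOn_Ioi.symm measurableSet_Ioi

lemma integrableOn_brokenPower (hr : 0 < r) (ha : -1 < a) (hb : b < -1) :
    IntegrableOn (brokenPower r a b) (Ioi 0) := by
  rw [← Ioc_union_Ioi_eq_Ioi hr.le]
  exact (integrableOn_Ioc_brokenPower hr ha).union (integrableOn_Ioi_brokenPower hr hb)

lemma integral_brokenPower (hr : 0 < r) (ha : -1 < a) (hb : b < -1) :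
    ∫ t in Ioi 0, brokenPower r a b t = r ^ (a + 1) * ((a + 1)⁻¹ - (b + 1)⁻¹) := by
  rw [← Ioc_union_Ioi_eq_Ioi hr.le, setIntegral_union Ioc_disjoint_Ioi_same measurableSet_Ioi
      (integrableOn_Ioc_brokenPower hr ha) (integrableOn_Ioi_brokenPower hr hb),
    setIntegral_congr_fun measurableSet_Ioc brokenPower_eqOn_Ioc,
    setIntegral_congr_fun measurableSet_Ioi brokenPower_eqOn_Ioi,
    ← intervalIntegral.integral_of_le hr.le, integral_rpow (Or.inl ha), integral_const_mul,
    integral_Ioi_rpow_of_lt hb hr, Real.zero_rpow (by linarith), mul_div_assoc', mul_neg,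
    ← Real.rpow_add hr, show a - b + (b + 1) = a + 1 by ring]
  ring

variable {E : Type*} [NormedAddCommGroup E] [NormedSpace ℝ E] [FiniteDimensional ℝ E]
  [Nontrivial E]

lemma eqOn_pow_finrank_pred_mul_brokenPower :
    EqOn (fun t ↦ t ^ (finrank ℝ E - 1) • brokenPower r a b t)
      (brokenPower r (a + finrank ℝ E - 1) (b + finrank ℝ E - 1)) (Ioi 0) := by
  intro t (ht : 0 < t)
  dsimp only
  rw [smul_eq_mul, pow_mul_brokenPower ht, Nat.cast_pred finrank_pos, add_sub_assoc,
    add_sub_assoc]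

variable [MeasurableSpace E] [BorelSpace E] (μ : Measure E) [μ.IsAddHaarMeasure]

lemma integrable_brokenPower_norm {n : ℕ} (hn : finrank ℝ E = n) (hr : 0 < r) (ha : -(n : ℝ) < a)
    (hb : b < -(n : ℝ)) : Integrable (fun z : E ↦ brokenPower r a b ‖z‖) μ := by
  subst hn
  rw [integrable_fun_norm_addHaar μ]
  exact (integrableOn_brokenPower hr (by linarith) (by linarith)).congr_fun
    eqOn_pow_finrank_pred_mul_brokenPower.symm measurableSet_Ioi

lemma integral_brokenPower_norm {n : ℕ} (hn : finrank ℝ E = n) (hr : 0 < r) (ha : -(n : ℝ) < a)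
    (hb : b < -(n : ℝ)) :
    ∫ z, brokenPower r a b ‖z‖ ∂μ =
      n * μ.real (ball 0 1) * (r ^ (a + n) * ((a + n)⁻¹ - (b + n)⁻¹)) := by
  subst hn
  rw [integral_fun_norm_addHaar μ, setIntegral_congr_fun measurableSet_Ioi
      eqOn_pow_finrank_pred_mul_brokenPower,
    integral_brokenPower hr (by linarith) (by linarith), nsmul_eq_mul, smul_eq_mul, mul_assoc]
  simp only [sub_add_cancel]

lemma integral_rpow_mul_brokenPower_norm {n : ℕ} (hn : finrank ℝ E = n) {m α : ℝ} (hr : 0 < r)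
    (hm : -(n : ℝ) < m) (hmα : m < α) :
    ∫ z, r ^ (-((n : ℝ) + α)) * brokenPower r m (m - (n + α)) ‖z‖ ∂μ =
      n * μ.real (ball 0 1) * r ^ (m - α) * ((m + n)⁻¹ + (α - m)⁻¹) := by
  rw [integral_const_mul, integral_brokenPower_norm μ hn hr hm (by linarith),
    show m - (n + α) + n = -(α - m) by ring, inv_neg, sub_neg_eq_add, Real.rpow_sub hr,
    Real.rpow_neg hr.le, Real.rpow_add hr, Real.rpow_add hr]
  field_simp

end BrokenPower

lemma LinearMap.abs_det_le_pow_finrank {E : Type*} [NormedAddCommGroup E] [NormedSpace ℝ E]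
    [FiniteDimensional ℝ E] (f : E →ₗ[ℝ] E) {L : ℝ} (hL : 0 ≤ L)
    (hf : ∀ v, ‖f v‖ ≤ L * ‖v‖) : |LinearMap.det f| ≤ L ^ finrank ℝ E := by
  borelize E
  let μ : Measure E := Measure.addHaar
  have himage : f '' closedBall 0 1 ⊆ closedBall 0 L := by
    rintro _ ⟨v, hv, rfl⟩
    rw [mem_closedBall_zero_iff] at hv ⊢
    simpa using (hf v).trans (mul_le_of_le_one_right hL hv)
  have hmono := measure_mono (μ := μ) himage
  rwa [Measure.addHaar_image_linearMap, Measure.addHaar_closedBall μ 0 zero_le_one,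
    Measure.addHaar_closedBall μ 0 hL, one_pow, ENNReal.ofReal_one, one_mul,
    ENNReal.mul_le_mul_iff_left (measure_ball_pos μ 0 one_pos).ne' measure_ball_lt_top.ne,
    ENNReal.ofReal_le_ofReal_iff (by positivity)] at hmono

lemma rpow_div_two_sqrt_le {δ c p : ℝ} (hδ : 0 < δ) (hc : 1 ≤ c) (hp : -2 ≤ p) :
    (δ / (2 * √c)) ^ p ≤ 4 * c * δ ^ p := by
  have hs : 1 ≤ 2 * √c := by linarith [Real.one_le_sqrt.mpr hc]
  calc (δ / (2 * √c)) ^ p = (2 * √c) ^ (-p) * δ ^ p := by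
        rw [Real.div_rpow hδ.le (by linarith), Real.rpow_neg (by linarith), div_eq_inv_mul]
    _ ≤ (2 * √c) ^ (2 : ℝ) * δ ^ p := by
        gcongr
        linarith
    _ = 4 * c * δ ^ p := by
        rw [Real.rpow_two, mul_pow, Real.sq_sqrt (by linarith)]
        norm_num

lemma Real.le_sqrt_mul_of_sq_le_mul_sq {x y c : ℝ} (hy : 0 ≤ y) (h : x ^ 2 ≤ c * y ^ 2) :
    x ≤ √c * y := by
  have := Real.sqrt_le_sqrt h
  rw [Real.sqrt_sq_eq_abs, Real.sqrt_mul' _ (sq_nonneg y), Real.sqrt_sq hy] at this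
  exact (le_abs_self x).trans this

namespace Matrix

variable {d : ℕ} {M N : Matrix (Fin d) (Fin d) ℝ}

lemma abs_det_le_pow_of_norm_toEuclideanLin_le {L : ℝ} (hL : 0 ≤ L)
    (hM : ∀ v, ‖toEuclideanLin M v‖ ≤ L * ‖v‖) : |M.det| ≤ L ^ d := by
  have h := (toEuclideanLin M).abs_det_le_pow_finrank hL hM
  rwa [toEuclideanLin_eq_toLin_orthonormal, LinearMap.det_toLin, finrank_euclideanSpace_fin] at h

lemma toEuclideanLin_toEuclideanLin_inv (hM : IsUnit M) (u : EuclideanSpace ℝ (Fin d)) :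
    toEuclideanLin M (toEuclideanLin M⁻¹ u) = u := by
  rw [← LinearMap.comp_apply, ← toLpLin_mul_same,
    mul_nonsing_inv M ((isUnit_iff_isUnit_det M).mp hM), toLpLin_one, LinearMap.id_apply]

lemma norm_toEuclideanLin_mul_le {s t : ℝ} (hs : 0 ≤ s)
    (hM : ∀ v, ‖toEuclideanLin M v‖ ≤ s * ‖v‖) (hN : ∀ v, ‖toEuclideanLin N v‖ ≤ t * ‖v‖)
    (v : EuclideanSpace ℝ (Fin d)) : ‖toEuclideanLin (M * N) v‖ ≤ s * t * ‖v‖ := by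
  rw [toLpLin_mul_same, LinearMap.comp_apply, mul_assoc]
  exact (hM _).trans (mul_le_mul_of_nonneg_left (hN v) hs)

lemma norm_toEuclideanLin_le_sqrt {c : ℝ} (hM : ∀ v, ‖toEuclideanLin M v‖ ^ 2 ≤ c * ‖v‖ ^ 2)
    (v : EuclideanSpace ℝ (Fin d)) : ‖toEuclideanLin M v‖ ≤ √c * ‖v‖ :=
  Real.le_sqrt_mul_of_sq_le_mul_sq (norm_nonneg v) (hM v)

lemma norm_toEuclideanLin_inv_le_sqrt {c : ℝ} (hc : 0 < c) (hMu : IsUnit M)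
    (hM : ∀ v, c⁻¹ * ‖v‖ ^ 2 ≤ ‖toEuclideanLin M v‖ ^ 2) (u : EuclideanSpace ℝ (Fin d)) :
    ‖toEuclideanLin M⁻¹ u‖ ≤ √c * ‖u‖ := by
  refine Real.le_sqrt_mul_of_sq_le_mul_sq (norm_nonneg u) ?_
  have h := hM (toEuclideanLin M⁻¹ u)
  rw [toEuclideanLin_toEuclideanLin_inv hMu, inv_mul_le_iff₀ hc] at h
  exact h

end Matrix

lemma Real.continuousAt_Gamma_of_pos {s : ℝ} (hs : 0 < s) : ContinuousAt Gamma s :=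
  (differentiableAt_Gamma fun n ↦ by linarith [(n.cast_nonneg : (0 : ℝ) ≤ n)]).continuousAt

section StableConst

variable {d : ℕ}

lemma stableConst_pos {α : ℝ} (h0 : 0 < α) (h2 : α < 2) : 0 < stableConst d α := by
  unfold stableConst
  have := Gamma_pos_of_pos (by positivity : 0 < ((d : ℝ) + α) / 2)
  have := Gamma_pos_of_pos (by linarith : 0 < (2 - α) / 2)
  positivity

lemma continuousOn_stableConst : ContinuousOn (stableConst d) (Ioo 0 2) := by
  intro α ⟨h0, h2⟩
  apply ContinuousAt.continuousWithinAt
  have hGnum : ContinuousAt (fun a : ℝ ↦ Gamma ((d + a) / 2)) α :=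
    (continuousAt_Gamma_of_pos (by positivity)).comp (by fun_prop)
  have hGden : ContinuousAt (fun a : ℝ ↦ Gamma ((2 - a) / 2)) α :=
    (continuousAt_Gamma_of_pos (by linarith)).comp (by fun_prop)
  have hpow : ContinuousAt (fun a : ℝ ↦ (2 : ℝ) ^ (a - 2)) α :=
    (continuousAt_const_rpow two_ne_zero).comp (by fun_prop)
  refine ((continuousAt_id.mul hpow).mul hGnum).div (continuousAt_const.mul hGden) ?_
  have := Gamma_pos_of_pos (by linarith : 0 < (2 - α) / 2)
  positivity

lemma exists_stableConst_le {α₀ ϑ₀ : ℝ} (hα₀ : 0 < α₀) (hϑ₀ : ϑ₀ < 2) :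
    ∃ c, ∀ α ∈ Icc α₀ ϑ₀, stableConst d α ≤ c := by
  obtain ⟨c, hc⟩ := isCompact_Icc.exists_bound_of_continuousOn
    (continuousOn_stableConst.mono (Icc_subset_Ioo hα₀ hϑ₀))
  exact ⟨c, fun α hα ↦ (le_abs_self _).trans (hc α hα)⟩

end StableConst

section Coupling

variable {d : ℕ} {κ : ℝ}

lemma EuclideanSpace.one_le_of_ne {x y : EuclideanSpace ℝ (Fin d)} (h : x ≠ y) : 1 ≤ d :=
  Nat.one_le_iff_ne_zero.mpr (by rintro rfl; exact h (Subsingleton.elim x y))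

lemma norm_truncVec (hκ : 0 ≤ κ) {w : EuclideanSpace ℝ (Fin d)} (hw : w ≠ 0) :
    ‖truncVec κ w‖ = min ‖w‖ κ := by
  rw [truncVec, norm_smul, norm_div, norm_norm, div_mul_cancel₀ _ (norm_ne_zero_iff.mpr hw),
    Real.norm_of_nonneg (le_min hκ (norm_nonneg w)), min_comm]

lemma truncVec_neg (w : EuclideanSpace ℝ (Fin d)) : truncVec κ (-w) = -truncVec κ w := by
  simp only [truncVec, norm_neg, smul_neg]

lemma psiMap_eq_psiInvMap (A B : Matrix (Fin d) (Fin d) ℝ) (x y : EuclideanSpace ℝ (Fin d)) :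
    psiMap κ A B x y = psiInvMap κ B A y x := by
  ext1 z
  rw [psiMap, psiInvMap, ← neg_sub x y, truncVec_neg, sub_neg_eq_add]

variable {A B : Matrix (Fin d) (Fin d) ℝ} {x y : EuclideanSpace ℝ (Fin d)}

lemma div_le_norm_psiInvMap {s : ℝ} (hs : 0 < s) (hA : IsUnit A)
    (hAs : ∀ v, ‖toEuclideanLin A v‖ ≤ s * ‖v‖) (hBs : ∀ v, ‖toEuclideanLin B v‖ ≤ s * ‖v‖)
    {z : EuclideanSpace ℝ (Fin d)} (hz : ‖z‖ ≤ ‖truncVec κ (x - y)‖ / (2 * s)) :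
    ‖truncVec κ (x - y)‖ / (2 * s) ≤ ‖psiInvMap κ A B x y z‖ := by
  have hupper : ‖toEuclideanLin B z - truncVec κ (x - y)‖ ≤ s * ‖psiInvMap κ A B x y z‖ := by
    simpa only [psiInvMap, toEuclideanLin_toEuclideanLin_inv hA] using
      hAs (psiInvMap κ A B x y z)
  have hlower : ‖truncVec κ (x - y)‖ - s * ‖z‖ ≤ ‖toEuclideanLin B z - truncVec κ (x - y)‖ := by
    rw [norm_sub_rev]
    linarith [norm_sub_norm_le (truncVec κ (x - y)) (toEuclideanLin B z), hBs z]
  rw [le_div_iff₀ (by positivity)] at hz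
  rw [div_le_iff₀ (by positivity)]
  nlinarith

variable {α η detfac : ℝ} {Φ : EuclideanSpace ℝ (Fin d) → EuclideanSpace ℝ (Fin d)}

lemma couplingDensity_nonneg (hsc : 0 ≤ stableConst d α) (hdet : 0 ≤ detfac)
    (z : EuclideanSpace ℝ (Fin d)) : 0 ≤ couplingDensity α η detfac Φ z := by
  unfold couplingDensity
  apply le_min <;> split_ifs <;> positivity

lemma couplingDensity_le_rpow_norm (hsc : 0 ≤ stableConst d α) (z : EuclideanSpace ℝ (Fin d)) :
    couplingDensity α η detfac Φ z ≤ stableConst d α * ‖z‖ ^ (-((d : ℝ) + α)) := by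
  refine (min_le_left _ _).trans ?_
  split_ifs <;> first | rfl | positivity

lemma couplingDensity_le_rpow_of_le_norm (hα : 0 ≤ (d : ℝ) + α) (hsc : 0 ≤ stableConst d α)
    (hdet : 0 ≤ detfac) {r : ℝ} (hr : 0 < r) {z : EuclideanSpace ℝ (Fin d)} (hz : r ≤ ‖Φ z‖) :
    couplingDensity α η detfac Φ z ≤ stableConst d α * detfac * r ^ (-((d : ℝ) + α)) := by
  refine (min_le_right _ _).trans ?_
  split_ifs
  · exact mul_le_mul_of_nonneg_left (rpow_le_rpow_of_nonpos hr hz (by linarith)) (by positivity)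
  · positivity

lemma rpow_mul_couplingDensity_le_brokenPower (hα : 0 ≤ (d : ℝ) + α)
    (hsc : 0 ≤ stableConst d α) {c D r m : ℝ} (hc : stableConst d α ≤ c) (hdet : 0 ≤ detfac)
    (hdetD : detfac ≤ D) (hD : 1 ≤ D) (hr : 0 < r) {z : EuclideanSpace ℝ (Fin d)}
    (hΦ : ‖z‖ ≤ r → r ≤ ‖Φ z‖) :
    ‖z‖ ^ m * couplingDensity α η detfac Φ z ≤
      c * D * (r ^ (-((d : ℝ) + α)) * brokenPower r m (m - (d + α)) ‖z‖) := by
  unfold brokenPower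
  split_ifs with hz
  · rw [mul_comm, ← mul_assoc]
    refine mul_le_mul_of_nonneg_right ?_ (by positivity)
    refine (couplingDensity_le_rpow_of_le_norm hα hsc hdet hr (hΦ hz)).trans ?_
    exact mul_le_mul_of_nonneg_right (mul_le_mul hc hdetD hdet (hsc.trans hc)) (by positivity)
  · have hz0 : 0 < ‖z‖ := hr.trans (not_le.mp hz)
    calc ‖z‖ ^ m * couplingDensity α η detfac Φ z
        ≤ ‖z‖ ^ m * (c * D * ‖z‖ ^ (-((d : ℝ) + α))) := by
          gcongr
          refine (couplingDensity_le_rpow_norm hsc z).trans ?_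
          gcongr
          exact hc.trans (le_mul_of_one_le_right (hsc.trans hc) hD)
      _ = c * D * (r ^ (-((d : ℝ) + α)) * (r ^ (m - (m - (d + α))) * ‖z‖ ^ (m - (d + α)))) := by
          rw [sub_sub_cancel, sub_eq_add_neg m, rpow_add hz0, rpow_neg hr.le]
          field_simp

lemma rpow_mul_couplingDensity_psiInvMap_le {s c m : ℝ} (hκ : 0 < κ) (hxy : x ≠ y) (hs : 1 ≤ s)
    (hA : IsUnit A) (hAs : ∀ v, ‖toEuclideanLin A v‖ ≤ s * ‖v‖)
    (hAinv : ∀ v, ‖toEuclideanLin A⁻¹ v‖ ≤ s * ‖v‖) (hBs : ∀ v, ‖toEuclideanLin B v‖ ≤ s * ‖v‖)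
    (hα : 0 ≤ (d : ℝ) + α) (hsc : 0 ≤ stableConst d α) (hc : stableConst d α ≤ c)
    (z : EuclideanSpace ℝ (Fin d)) :
    ‖z‖ ^ m * couplingDensity α η |(A⁻¹ * B).det| (psiInvMap κ A B x y) z ≤
      c * (s * s) ^ d * ((min ‖x - y‖ κ / (2 * s)) ^ (-((d : ℝ) + α)) *
        brokenPower (min ‖x - y‖ κ / (2 * s)) m (m - (d + α)) ‖z‖) := by
  have hw := norm_truncVec (d := d) hκ.le (sub_ne_zero.mpr hxy)
  have hδ : 0 < min ‖x - y‖ κ := lt_min (norm_pos_iff.mpr (sub_ne_zero.mpr hxy)) hκ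
  refine rpow_mul_couplingDensity_le_brokenPower hα hsc hc (abs_nonneg _)
    (abs_det_le_pow_of_norm_toEuclideanLin_le (by positivity)
      (norm_toEuclideanLin_mul_le (by linarith) hAinv hBs))
    (one_le_pow₀ (one_le_mul_of_one_le_of_one_le hs hs)) (by positivity) fun hz ↦ ?_
  rw [← hw] at hz ⊢
  exact div_le_norm_psiInvMap (by linarith) hA hAs hBs hz

lemma rpow_mul_add_couplingDensity_le {c₂ c m : ℝ} (hκ : 0 < κ) (hxy : x ≠ y) (hc₂ : 1 ≤ c₂)
    (hAu : IsUnit A) (hBu : IsUnit B)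
    (hA : ∀ v, c₂⁻¹ * ‖v‖ ^ 2 ≤ ‖toEuclideanLin A v‖ ^ 2 ∧ ‖toEuclideanLin A v‖ ^ 2 ≤ c₂ * ‖v‖ ^ 2)
    (hB : ∀ v, c₂⁻¹ * ‖v‖ ^ 2 ≤ ‖toEuclideanLin B v‖ ^ 2 ∧ ‖toEuclideanLin B v‖ ^ 2 ≤ c₂ * ‖v‖ ^ 2)
    (hα : 0 ≤ (d : ℝ) + α) (hsc : 0 ≤ stableConst d α) (hc : stableConst d α ≤ c)
    (z : EuclideanSpace ℝ (Fin d)) :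
    ‖z‖ ^ m * (couplingDensity α η |(A⁻¹ * B).det| (psiInvMap κ A B x y) z +
        couplingDensity α η |(B⁻¹ * A).det| (psiMap κ A B x y) z) ≤
      2 * c * c₂ ^ d * ((min ‖x - y‖ κ / (2 * √c₂)) ^ (-((d : ℝ) + α)) *
        brokenPower (min ‖x - y‖ κ / (2 * √c₂)) m (m - (d + α)) ‖z‖) := by
  have hc₂0 : 0 < c₂ := by linarith
  have hs : 1 ≤ √c₂ := Real.one_le_sqrt.mpr hc₂
  have hAs := norm_toEuclideanLin_le_sqrt fun v ↦ (hA v).2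
  have hBs := norm_toEuclideanLin_le_sqrt fun v ↦ (hB v).2
  have hAinv := norm_toEuclideanLin_inv_le_sqrt hc₂0 hAu fun v ↦ (hA v).1
  have hBinv := norm_toEuclideanLin_inv_le_sqrt hc₂0 hBu fun v ↦ (hB v).1
  have h₁ := rpow_mul_couplingDensity_psiInvMap_le (η := η) (m := m) hκ hxy hs hAu hAs hAinv hBs
    hα hsc hc z
  have h₂ := rpow_mul_couplingDensity_psiInvMap_le (η := η) (m := m) hκ hxy.symm hs hBu hBs hBinv
    hAs hα hsc hc z
  rw [norm_sub_rev] at h₂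
  rw [Real.mul_self_sqrt hc₂0.le] at h₁ h₂
  rw [mul_add, psiMap_eq_psiInvMap]
  linarith

lemma integral_rpow_mul_add_couplingDensity_le {c₂ c m : ℝ} (hκ : 0 < κ) (hxy : x ≠ y)
    (hc₂ : 1 ≤ c₂) (hAu : IsUnit A) (hBu : IsUnit B)
    (hA : ∀ v, c₂⁻¹ * ‖v‖ ^ 2 ≤ ‖toEuclideanLin A v‖ ^ 2 ∧ ‖toEuclideanLin A v‖ ^ 2 ≤ c₂ * ‖v‖ ^ 2)
    (hB : ∀ v, c₂⁻¹ * ‖v‖ ^ 2 ≤ ‖toEuclideanLin B v‖ ^ 2 ∧ ‖toEuclideanLin B v‖ ^ 2 ≤ c₂ * ‖v‖ ^ 2)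
    (hm : 0 ≤ m) (hmα : m < α) (hsc : 0 ≤ stableConst d α) (hc : stableConst d α ≤ c) :
    ∫ z, ‖z‖ ^ m * (couplingDensity α η |(A⁻¹ * B).det| (psiInvMap κ A B x y) z +
        couplingDensity α η |(B⁻¹ * A).det| (psiMap κ A B x y) z) ≤
      2 * c * c₂ ^ d * (d * volume.real (ball (0 : EuclideanSpace ℝ (Fin d)) 1) *
        (min ‖x - y‖ κ / (2 * √c₂)) ^ (m - α) * ((m + d)⁻¹ + (α - m)⁻¹)) := by
  have : Nontrivial (EuclideanSpace ℝ (Fin d)) := nontrivial_of_ne x y hxy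
  have hdim : finrank ℝ (EuclideanSpace ℝ (Fin d)) = d := finrank_euclideanSpace_fin
  have hδ : 0 < min ‖x - y‖ κ := lt_min (norm_pos_iff.mpr (sub_ne_zero.mpr hxy)) hκ
  have hr : 0 < min ‖x - y‖ κ / (2 * √c₂) := by positivity
  have hd : (1 : ℝ) ≤ d := by exact_mod_cast EuclideanSpace.one_le_of_ne hxy
  have hdm : -(d : ℝ) < m := by linarith
  rw [← integral_rpow_mul_brokenPower_norm volume hdim hr hdm hmα, ← integral_const_mul]
  refine integral_mono_of_nonneg (ae_of_all _ fun z ↦ mul_nonneg (by positivity)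
      (add_nonneg (couplingDensity_nonneg hsc (abs_nonneg _) z)
        (couplingDensity_nonneg hsc (abs_nonneg _) z)))
    (((integrable_brokenPower_norm volume hdim hr hdm (by linarith)).const_mul _).const_mul _)
    (ae_of_all _ (rpow_mul_add_couplingDensity_le hκ hxy hc₂ hAu hBu hA hB (by linarith) hsc hc))

end Coupling

theorem stmt2_general (d : ℕ) (α₀ ϑ₀ c₂ : ℝ)
    (hα₀ : 1 < α₀) (hϑ₀ : ϑ₀ < 2) (hc₂ : 1 ≤ c₂) :
    ∃ C ≥ (1 : ℝ), ∀ κ η : ℝ, 0 < κ → 0 < η → ∀ α ∈ Set.Icc α₀ ϑ₀,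
      ∀ A B : Matrix (Fin d) (Fin d) ℝ, IsUnit A → IsUnit B →
      (∀ v : EuclideanSpace ℝ (Fin d),
        c₂⁻¹ * ‖v‖ ^ 2 ≤ ‖Matrix.toEuclideanLin A v‖ ^ 2 ∧
          ‖Matrix.toEuclideanLin A v‖ ^ 2 ≤ c₂ * ‖v‖ ^ 2) →
      (∀ v : EuclideanSpace ℝ (Fin d),
        c₂⁻¹ * ‖v‖ ^ 2 ≤ ‖Matrix.toEuclideanLin B v‖ ^ 2 ∧
          ‖Matrix.toEuclideanLin B v‖ ^ 2 ≤ c₂ * ‖v‖ ^ 2) →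
      ∀ x y : EuclideanSpace ℝ (Fin d), x ≠ y → ∀ m ∈ Set.Icc (0 : ℝ) 1,
        (∫ z : EuclideanSpace ℝ (Fin d),
            ‖z‖ ^ m *
              (couplingDensity α η |(A⁻¹ * B).det| (psiInvMap κ A B x y) z +
                couplingDensity α η |(B⁻¹ * A).det| (psiMap κ A B x y) z))
          ≤ C * (min ‖x - y‖ κ) ^ (m - α) := by
  obtain ⟨c, hc⟩ := exists_stableConst_le (d := d) (by linarith : (0 : ℝ) < α₀) hϑ₀
  set V := (volume : Measure (EuclideanSpace ℝ (Fin d))).real (ball 0 1)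
  refine ⟨max 1 (8 * c * c₂ ^ (d + 1) * d * V * (1 + (α₀ - 1)⁻¹)), le_max_left _ _, ?_⟩
  intro κ η hκ hη α hα A B hAu hBu hA hB x y hxy m hm
  have hd : (1 : ℝ) ≤ d := by exact_mod_cast EuclideanSpace.one_le_of_ne hxy
  have hsc := stableConst_pos (d := d) (α := α) (by linarith [hα.1]) (by linarith [hα.2])
  have hc0 : 0 ≤ c := hsc.le.trans (hc α hα)
  set δ := min ‖x - y‖ κ
  have hδ : 0 < δ := lt_min (norm_pos_iff.mpr (sub_ne_zero.mpr hxy)) hκ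
  have hrδ := rpow_div_two_sqrt_le hδ hc₂ (by linarith [hα.2, hm.1] : -2 ≤ m - α)
  calc _ ≤ 2 * c * c₂ ^ d * (d * V * (δ / (2 * √c₂)) ^ (m - α) * ((m + d)⁻¹ + (α - m)⁻¹)) :=
        integral_rpow_mul_add_couplingDensity_le hκ hxy hc₂ hAu hBu hA hB hm.1
          (by linarith [hα.1, hm.2]) hsc.le (hc α hα)
    _ ≤ 2 * c * c₂ ^ d * (d * V * (4 * c₂ * δ ^ (m - α)) * (1 + (α₀ - 1)⁻¹)) := by
        gcongr
        · exact add_nonneg (inv_nonneg.mpr (by linarith [hm.1]))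
            (inv_nonneg.mpr (by linarith [hα.1, hm.2]))
        · exact inv_le_one_of_one_le₀ (by linarith [hm.1])
        · exact hα.1
        · exact hm.2
    _ = 8 * c * c₂ ^ (d + 1) * d * V * (1 + (α₀ - 1)⁻¹) * δ ^ (m - α) := by ring
    _ ≤ _ := mul_le_mul_of_nonneg_right (le_max_right _ _) (by positivity)

theorem stmt2 (d : ℕ) (hd : 1 ≤ d) (α₀ ϑ₀ c₂ : ℝ)
    (hα₀ : 1 < α₀) (hα₀ϑ₀ : α₀ < ϑ₀) (hϑ₀ : ϑ₀ < 2) (hc₂ : 1 ≤ c₂) :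
    ∃ C ≥ (1 : ℝ), ∀ κ η : ℝ, 0 < κ → 0 < η → ∀ α ∈ Set.Icc α₀ ϑ₀,
      ∀ A B : Matrix (Fin d) (Fin d) ℝ, IsUnit A → IsUnit B →
      (∀ v : EuclideanSpace ℝ (Fin d),
        c₂⁻¹ * ‖v‖ ^ 2 ≤ ‖Matrix.toEuclideanLin A v‖ ^ 2 ∧
          ‖Matrix.toEuclideanLin A v‖ ^ 2 ≤ c₂ * ‖v‖ ^ 2) →
      (∀ v : EuclideanSpace ℝ (Fin d),
        c₂⁻¹ * ‖v‖ ^ 2 ≤ ‖Matrix.toEuclideanLin B v‖ ^ 2 ∧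
          ‖Matrix.toEuclideanLin B v‖ ^ 2 ≤ c₂ * ‖v‖ ^ 2) →
      ∀ x y : EuclideanSpace ℝ (Fin d), x ≠ y → ∀ m ∈ Set.Icc (0 : ℝ) 1,
        (∫ z : EuclideanSpace ℝ (Fin d),
            ‖z‖ ^ m *
              (couplingDensity α η |(A⁻¹ * B).det| (psiInvMap κ A B x y) z +
                couplingDensity α η |(B⁻¹ * A).det| (psiMap κ A B x y) z))
          ≤ C * (min ‖x - y‖ κ) ^ (m - α) :=
  stmt2_general d α₀ ϑ₀ c₂ hα₀ hϑ₀ hc₂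
end

section
/- For every α₀ ∈ (1,2) there exists a constant C > 0, depending only on α₀, such that for every integer d ≥ 1 and every α ∈ [α₀, 2): c_{d,α}·S_d/(α−1) ≤ C·d·(2−α). -/
open Real MeasureTheory

/-- The surface area `S_d = 2·π^(d/2)/Γ(d/2)` of the unit sphere in `ℝ^d`. -/
noncomputable def sphereArea (d : ℕ) : ℝ :=
  2 * Real.pi ^ ((d : ℝ) / 2) / Real.Gamma ((d : ℝ) / 2)

/-!
Cancelling `π^(d/2)`, the quantity is `α·2^(α-1)·(Γ((d+α)/2)/Γ(d/2)) / Γ((2-α)/2) / (α-1)`.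
Convexity of `Γ` on `[d/2, d/2+1]` together with `Γ(x+1) = x·Γ(x)` bounds the ratio of Gamma
values by `max 1 (d/2) ≤ d`, and `Γ(s) = Γ(s+1)/s ≥ (min Γ)/s` bounds `1/Γ((2-α)/2)` by a
multiple of `2-α`; finally `α - 1 ≥ α₀ - 1`.
-/

namespace Real

theorem Gamma_add_le_max_one_mul_Gamma {x t : ℝ} (hx : 0 < x) (ht₀ : 0 ≤ t) (ht₁ : t ≤ 1) :
    Gamma (x + t) ≤ max 1 x * Gamma x := by
  have hseg : x + t ∈ segment ℝ x (x + 1) := by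
    rw [segment_eq_Icc (by linarith)]
    constructor <;> linarith
  calc Gamma (x + t) ≤ max (Gamma x) (Gamma (x + 1)) :=
        convexOn_Gamma.le_on_segment hx (Set.mem_Ioi.mpr (by linarith)) hseg
    _ = max 1 x * Gamma x := by
        rw [Gamma_add_one hx.ne', max_mul_of_nonneg _ _ (Gamma_pos_of_pos hx).le, one_mul]

theorem exists_pos_forall_div_le_Gamma : ∃ m > 0, ∀ s > 0, m / s ≤ Gamma s := by
  obtain ⟨x₀, hx₀, hmin⟩ := exists_isMinOn_Gamma_Ioi
  refine ⟨Gamma x₀, Gamma_pos_of_pos (by linarith [hx₀.1]), fun s hs => ?_⟩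
  have hle : Gamma x₀ ≤ Gamma (s + 1) := hmin (Set.mem_Ioi.mpr (by linarith))
  rw [Gamma_add_one hs.ne'] at hle
  rwa [div_le_iff₀' hs]

end Real

theorem stableConst_mul_sphereArea (d : ℕ) (α : ℝ) :
    stableConst d α * sphereArea d =
      α * 2 ^ (α - 1) * (Gamma ((d + α) / 2) / Gamma (d / 2)) / Gamma ((2 - α) / 2) := by
  have hpow : (2 : ℝ) ^ (α - 1) = 2 ^ (α - 2) * 2 := by
    rw [← rpow_add_one two_ne_zero]; ring_nf
  have hπ : π ^ ((d : ℝ) / 2) ≠ 0 := (rpow_pos_of_pos pi_pos _).ne'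
  rw [stableConst, sphereArea, hpow]
  field_simp

theorem exists_stableConst_mul_sphereArea_le :
    ∃ K > 0, ∀ d : ℕ, 1 ≤ d → ∀ α ∈ Set.Ico (0 : ℝ) 2,
      stableConst d α * sphereArea d ≤ K * d * (2 - α) := by
  obtain ⟨m, hm, hGamma⟩ := exists_pos_forall_div_le_Gamma
  refine ⟨2 / m, by positivity, fun d hd α ⟨hα₀, hα₂⟩ => ?_⟩
  have hd' : (1 : ℝ) ≤ d := by exact_mod_cast hd
  have hx : (0 : ℝ) < d / 2 := by positivity
  have hs : (0 : ℝ) < (2 - α) / 2 := by linarith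
  have hprefactor : α * (2 : ℝ) ^ (α - 1) ≤ 2 * 2 := by
    gcongr
    calc (2 : ℝ) ^ (α - 1) ≤ 2 ^ (1 : ℝ) := rpow_le_rpow_of_exponent_le one_le_two (by linarith)
      _ = 2 := rpow_one 2
  have hratio : Gamma ((d + α) / 2) / Gamma (d / 2) ≤ d := by
    rw [div_le_iff₀ (Gamma_pos_of_pos hx), add_div]
    refine (Gamma_add_le_max_one_mul_Gamma hx (by positivity) (by linarith)).trans ?_
    gcongr
    exact max_le hd' (by linarith)
  have hinv : 1 / Gamma ((2 - α) / 2) ≤ (2 - α) / 2 / m := by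
    rw [div_le_div_iff₀ (Gamma_pos_of_pos hs) hm, one_mul, ← div_le_iff₀' hs]
    exact hGamma _ hs
  rw [stableConst_mul_sphereArea, div_eq_mul_one_div]
  calc _ ≤ 2 * 2 * d * ((2 - α) / 2 / m) := by gcongr
    _ = 2 / m * d * (2 - α) := by ring

theorem stmt4 (α₀ : ℝ) (hα₀ : α₀ ∈ Set.Ioo (1 : ℝ) 2) :
    ∃ C > 0, ∀ (d : ℕ), 1 ≤ d → ∀ α ∈ Set.Ico α₀ 2,
      stableConst d α * sphereArea d / (α - 1) ≤ C * d * (2 - α) := by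
  obtain ⟨K, hK, hbound⟩ := exists_stableConst_mul_sphereArea_le
  have hα₀₁ : 0 < α₀ - 1 := by linarith [hα₀.1]
  refine ⟨K / (α₀ - 1), div_pos hK hα₀₁, fun d hd α ⟨hα₁, hα₂⟩ => ?_⟩
  calc stableConst d α * sphereArea d / (α - 1) ≤ K * d * (2 - α) / (α - 1) :=
        div_le_div_of_nonneg_right (hbound d hd α ⟨by linarith, hα₂⟩) (by linarith)
    _ ≤ K * d * (2 - α) / (α₀ - 1) :=
        div_le_div_of_nonneg_left (mul_nonneg (by positivity) (by linarith)) hα₀₁ (by linarith)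
    _ = K / (α₀ - 1) * d * (2 - α) := by ring
end

section
/- There exists an absolute constant C > 0 such that for every integer d ≥ 1 and all α, ϑ ∈ (1,2): S_d·| c_{d,α} − c_{d,ϑ} | ≤ C·d·|α − ϑ|. -/
open Real MeasureTheory

/-!
With `c = d/2` and `s = α/2`, the functional equation `Γ(x+1) = xΓ(x)` turns `S_d c_{d,α}` into
`s(1-s)4^s / Γ(2-s) · Γ(c+s)/Γ(c)`. The first factor has bounded derivative on `[0,1]` and
vanishes like `1-s` at `s = 1`. By log-convexity of `Γ`, the ratio `Γ(c+s)/Γ(c)` is at most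
`c^s` and its logarithmic derivative `ψ(c+s)` lies between `-log π` and `log(c+s)`. The only term
of the derivative that is not obviously `O(c)` is `(1-s)c^s log c`, and it is at most `c` because
`(1-s) log c ≤ c^(1-s)`. The mean value theorem then gives the Lipschitz bound.
-/

open Set

lemma differentiableAt_Gamma_of_pos {x : ℝ} (hx : 0 < x) : DifferentiableAt ℝ Gamma x :=
  differentiableOn_Gamma_Ioi.differentiableAt (Ioi_mem_nhds hx)

lemma hasDerivAt_Gamma_of_pos {x : ℝ} (hx : 0 < x) :
    HasDerivAt Gamma (Gamma x * logDeriv Gamma x) x := by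
  rw [logDeriv_apply, mul_div_cancel₀ _ (Gamma_pos_of_pos hx).ne']
  exact (differentiableAt_Gamma_of_pos hx).hasDerivAt

lemma hasDerivAt_log_Gamma {x : ℝ} (hx : 0 < x) :
    HasDerivAt (log ∘ Gamma) (logDeriv Gamma x) x :=
  (differentiableAt_Gamma_of_pos hx).hasDerivAt.log (Gamma_pos_of_pos hx).ne'

lemma logDeriv_Gamma_le_log {x : ℝ} (hx : 0 < x) : logDeriv Gamma x ≤ log x := by
  have h := convexOn_log_Gamma.le_slope_of_hasDerivAt hx (by simp; linarith) (lt_add_one x)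
    (hasDerivAt_log_Gamma hx)
  rwa [slope_def_field, Function.comp_apply, Function.comp_apply, Gamma_add_one hx.ne',
    log_mul hx.ne' (Gamma_pos_of_pos hx).ne', add_sub_cancel_right, add_sub_cancel_left,
    div_one] at h

lemma neg_log_pi_le_logDeriv_Gamma {x : ℝ} (hx : 1 ≤ x) : -log π ≤ logDeriv Gamma x := by
  have hx0 : (0 : ℝ) < x := by linarith
  have hslope := convexOn_log_Gamma.slope_le_of_hasDerivAt (by norm_num : (1 / 2 : ℝ) ∈ Ioi 0)
    (by norm_num : (1 : ℝ) ∈ Ioi 0) (by norm_num) (hasDerivAt_log_Gamma one_pos)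
  have hmono := convexOn_log_Gamma.monotoneOn_deriv
    (fun y hy => (hasDerivAt_log_Gamma hy).differentiableAt) (by norm_num : (1 : ℝ) ∈ Ioi 0)
    (show x ∈ Ioi 0 from hx0) hx
  rw [(hasDerivAt_log_Gamma one_pos).deriv, (hasDerivAt_log_Gamma hx0).deriv] at hmono
  rw [slope_def_field, Function.comp_apply, Function.comp_apply, Gamma_one, Gamma_one_half_eq,
    log_one, log_sqrt pi_pos.le] at hslope
  linarith [show (0 - log π / 2) / (1 - 1 / 2 : ℝ) = -log π by ring]

lemma abs_logDeriv_Gamma_le {x : ℝ} (hx : 1 ≤ x) : |logDeriv Gamma x| ≤ log (π * x) := by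
  rw [log_mul pi_pos.ne' (by positivity), abs_le]
  have := logDeriv_Gamma_le_log (by linarith : (0 : ℝ) < x)
  have := neg_log_pi_le_logDeriv_Gamma hx
  have := log_nonneg hx
  have := log_nonneg (by linarith [pi_gt_three] : (1 : ℝ) ≤ π)
  constructor <;> linarith

lemma inv_Gamma_le {x : ℝ} (hx : 1 ≤ x) : (Gamma x)⁻¹ ≤ x := by
  rw [inv_le_iff_one_le_mul₀ (Gamma_pos_of_pos (by linarith)), ← Gamma_add_one (by linarith)]
  exact Gamma_two.symm.trans_le <|
    Gamma_strictMonoOn_Ici.monotoneOn (by norm_num) (by simp; linarith) (by linarith)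

lemma Gamma_add_le_mul_rpow {c s : ℝ} (hc : 0 < c) (hs0 : 0 < s) (hs1 : s < 1) :
    Gamma (c + s) ≤ Gamma c * c ^ s := by
  have hG := Gamma_pos_of_pos hc
  have h := Gamma_mul_add_mul_le_rpow_Gamma_mul_rpow_Gamma hc (by linarith : 0 < c + 1)
    (sub_pos.2 hs1) hs0 (by ring)
  rw [Gamma_add_one hc.ne', mul_rpow hc.le hG.le, mul_left_comm, ← rpow_add hG,
    sub_add_cancel, rpow_one, show (1 - s) * c + s * (c + 1) = c + s by ring] at h
  exact h.trans_eq (mul_comm _ _)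

lemma mul_log_le_rpow {c : ℝ} (hc : 0 < c) (t : ℝ) : t * log c ≤ c ^ t := by
  rw [rpow_def_of_pos hc, mul_comm]
  linarith [add_one_le_exp (log c * t)]

lemma rpow_le_two_mul {c s : ℝ} (hc : 1 / 2 ≤ c) (hs0 : 0 ≤ s) (hs1 : s ≤ 1) :
    c ^ s ≤ 2 * c := by
  rcases le_total 1 c with h | h
  · linarith [rpow_le_self_of_one_le h hs1]
  · linarith [rpow_le_one (by linarith) h hs0]

noncomputable def stableAmplitude (s : ℝ) : ℝ := s * (1 - s) * 4 ^ s / Gamma (2 - s)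

/-- `S_d c_{d,α}` in the variables `c = d/2`, `s = α/2`, see `sphereArea_mul_stableConst`. -/
noncomputable def scaledStableConst (c s : ℝ) : ℝ :=
  stableAmplitude s * (Gamma (c + s) / Gamma c)

lemma sphereArea_mul_stableConst (d : ℕ) {α : ℝ} (hα : α < 2) :
    sphereArea d * stableConst d α = scaledStableConst (d / 2) (α / 2) := by
  have hpow : (4 : ℝ) ^ (α / 2) = 4 * 2 ^ (α - 2) := by
    rw [show (4 : ℝ) = 2 ^ (2 : ℝ) by norm_num, ← rpow_mul (by norm_num), ← rpow_add (by norm_num)]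
    ring_nf
  have hG : Gamma (2 - α / 2) = (2 - α) / 2 * Gamma ((2 - α) / 2) := by
    rw [← Gamma_add_one (by linarith)]; ring_nf
  have hG0 : Gamma ((2 - α) / 2) ≠ 0 := (Gamma_pos_of_pos (by linarith)).ne'
  have hπ : π ^ ((d : ℝ) / 2) ≠ 0 := (rpow_pos_of_pos pi_pos _).ne'
  have h2α : 2 - α ≠ 0 := by linarith
  simp only [sphereArea, stableConst, scaledStableConst, stableAmplitude, hpow, hG]
  rw [show ((d : ℝ) + α) / 2 = d / 2 + α / 2 by ring]
  field_simp
  ring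

lemma hasDerivAt_stableAmplitude {s : ℝ} (hs : s < 2) :
    HasDerivAt stableAmplitude
      (4 ^ s / Gamma (2 - s) * (1 - 2 * s + s * (1 - s) * (log 4 + logDeriv Gamma (2 - s)))) s := by
  have hG := Gamma_pos_of_pos (sub_pos.2 hs)
  have h4 : HasDerivAt (fun s : ℝ => (4 : ℝ) ^ s) (4 ^ s * log 4) s :=
    (hasStrictDerivAt_const_rpow (by norm_num) s).hasDerivAt
  have hΓ := (hasDerivAt_Gamma_of_pos (sub_pos.2 hs)).comp_const_sub 2 s
  have h := (((hasDerivAt_id s).mul ((hasDerivAt_id s).const_sub 1)).mul h4).div hΓ hG.ne'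
  refine h.congr_deriv ?_
  simp only [id, Pi.mul_apply]
  field_simp
  ring

lemma hasDerivAt_Gamma_add_div {c s : ℝ} (hcs : 0 < c + s) :
    HasDerivAt (fun s => Gamma (c + s) / Gamma c)
      (Gamma (c + s) / Gamma c * logDeriv Gamma (c + s)) s := by
  refine (((hasDerivAt_Gamma_of_pos hcs).comp_const_add c s).div_const (Gamma c)).congr_deriv ?_
  ring

lemma four_rpow_div_Gamma_two_sub_le {s : ℝ} (hs0 : 0 ≤ s) (hs1 : s ≤ 1) :
    4 ^ s / Gamma (2 - s) ≤ 8 := by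
  have hΓ := inv_Gamma_le (by linarith : (1 : ℝ) ≤ 2 - s)
  have hΓ0 := Gamma_pos_of_pos (by linarith : (0 : ℝ) < 2 - s)
  rw [div_eq_mul_inv]
  calc (4 : ℝ) ^ s * (Gamma (2 - s))⁻¹ ≤ 4 * 2 := by
        gcongr
        · exact rpow_le_self_of_one_le (by norm_num) hs1
        · linarith
    _ = 8 := by norm_num

lemma abs_stableAmplitude_le {s : ℝ} (hs0 : 0 ≤ s) (hs1 : s ≤ 1) :
    |stableAmplitude s| ≤ 8 * (1 - s) := by
  have hΓ0 := Gamma_pos_of_pos (by linarith : (0 : ℝ) < 2 - s)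
  rw [stableAmplitude, mul_div_assoc, abs_of_nonneg (by have := sub_nonneg.2 hs1; positivity)]
  calc s * (1 - s) * (4 ^ s / Gamma (2 - s)) ≤ 1 * (1 - s) * 8 := by
        gcongr
        exact four_rpow_div_Gamma_two_sub_le hs0 hs1
    _ = 8 * (1 - s) := by ring
lemma abs_deriv_stableAmplitude_le {s : ℝ} (hs0 : 0 ≤ s) (hs1 : s ≤ 1) :
    |deriv stableAmplitude s| ≤ 32 := by
  have hΓ0 := Gamma_pos_of_pos (by linarith : (0 : ℝ) < 2 - s)
  have hlog4 : |log 4| ≤ 3 := by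
    rw [abs_of_nonneg (log_nonneg (by norm_num))]
    linarith [log_le_sub_one_of_pos (by norm_num : (0 : ℝ) < 4)]
  have hψ : |logDeriv Gamma (2 - s)| ≤ 6 := by
    refine (abs_logDeriv_Gamma_le (by linarith)).trans ?_
    have := log_le_sub_one_of_pos (mul_pos pi_pos (by linarith : (0 : ℝ) < 2 - s))
    nlinarith [pi_lt_d2, pi_pos]
  have hbracket : |1 - 2 * s + s * (1 - s) * (log 4 + logDeriv Gamma (2 - s))| ≤ 4 := by
    have hss : s * (1 - s) ≤ 1 / 4 := by nlinarith [sq_nonneg (s - 1 / 2)]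
    have hss0 : 0 ≤ s * (1 - s) := mul_nonneg hs0 (sub_nonneg.2 hs1)
    calc _ ≤ |1 - 2 * s| + s * (1 - s) * (|log 4| + |logDeriv Gamma (2 - s)|) := by
          refine (abs_add_le _ _).trans ?_
          rw [abs_mul, abs_of_nonneg hss0]
          gcongr
          exact abs_add_le _ _
      _ ≤ 1 + 1 / 4 * (3 + 6) := by
          gcongr
          rw [abs_le]; constructor <;> linarith
      _ ≤ 4 := by norm_num
  rw [(hasDerivAt_stableAmplitude (by linarith)).deriv, abs_mul, abs_of_nonneg (by positivity)]
  calc 4 ^ s / Gamma (2 - s) * |1 - 2 * s + s * (1 - s) * (log 4 + logDeriv Gamma (2 - s))|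
      ≤ 8 * 4 := by
        gcongr
        exact four_rpow_div_Gamma_two_sub_le hs0 hs1
    _ = 32 := by norm_num

lemma one_sub_mul_rpow_mul_log_le {c s : ℝ} (hc : 1 / 2 ≤ c) (hs0 : 0 ≤ s) (hs1 : s ≤ 1) :
    (1 - s) * c ^ s * log (π * (c + s)) ≤ 19 * c := by
  have hc0 : 0 < c := by linarith
  have hlog : log (π * (c + s)) ≤ 9 + log c := by
    have h3π : log (3 * π) ≤ 9 := by
      linarith [log_le_sub_one_of_pos (by positivity : 0 < 3 * π), pi_lt_d2]
    calc log (π * (c + s)) ≤ log (3 * π * c) := log_le_log (by positivity) (by nlinarith [pi_pos])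
      _ = log (3 * π) + log c := log_mul (by positivity) hc0.ne'
      _ ≤ 9 + log c := by linarith
  have hdecay : (1 - s) * c ^ s * log c ≤ c := by
    have := mul_le_mul_of_nonneg_left (mul_log_le_rpow hc0 (1 - s)) (rpow_nonneg hc0.le s)
    rwa [← rpow_add hc0, add_sub_cancel, rpow_one, ← mul_assoc, mul_comm (c ^ s)] at this
  have hpow := rpow_le_two_mul hc hs0 hs1
  have hw : 0 ≤ (1 - s) * c ^ s := mul_nonneg (by linarith) (rpow_nonneg hc0.le s)
  calc (1 - s) * c ^ s * log (π * (c + s)) ≤ (1 - s) * c ^ s * (9 + log c) :=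
        mul_le_mul_of_nonneg_left hlog hw
    _ = 9 * ((1 - s) * c ^ s) + (1 - s) * c ^ s * log c := by ring
    _ ≤ 9 * (2 * c) + c := by nlinarith [rpow_nonneg hc0.le s]
    _ = 19 * c := by ring

lemma hasDerivAt_scaledStableConst {c s : ℝ} (hs : s < 2) (hcs : 0 < c + s) :
    HasDerivAt (scaledStableConst c) (deriv stableAmplitude s * (Gamma (c + s) / Gamma c) +
      stableAmplitude s * (Gamma (c + s) / Gamma c * logDeriv Gamma (c + s))) s :=
  (hasDerivAt_stableAmplitude hs).differentiableAt.hasDerivAt.mul (hasDerivAt_Gamma_add_div hcs)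

lemma abs_deriv_scaledStableConst_le {c s : ℝ} (hc : 1 / 2 ≤ c) (hs : s ∈ Ioo (1 / 2) 1) :
    |deriv (scaledStableConst c) s| ≤ 216 * c := by
  obtain ⟨hs0, hs1⟩ := hs
  have hc0 : 0 < c := by linarith
  set R := Gamma (c + s) / Gamma c
  have hR0 : 0 ≤ R := by positivity
  have hRc : R ≤ c ^ s := by
    rw [div_le_iff₀ (Gamma_pos_of_pos hc0), mul_comm]
    exact Gamma_add_le_mul_rpow hc0 (by linarith) hs1
  have hψ := abs_logDeriv_Gamma_le (by linarith : 1 ≤ c + s)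
  have hg := abs_stableAmplitude_le (by linarith) hs1.le
  have hg' := abs_deriv_stableAmplitude_le (by linarith) hs1.le
  have hlog := one_sub_mul_rpow_mul_log_le hc (by linarith) hs1.le
  have hpow := rpow_le_two_mul hc (by linarith) hs1.le
  rw [(hasDerivAt_scaledStableConst (by linarith) (by linarith)).deriv]
  calc _ ≤ |deriv stableAmplitude s| * R +
        |stableAmplitude s| * (R * |logDeriv Gamma (c + s)|) := by
        refine (abs_add_le _ _).trans_eq ?_
        rw [abs_mul, abs_mul, abs_mul, abs_of_nonneg hR0]
    _ ≤ 32 * c ^ s + 8 * (1 - s) * (c ^ s * log (π * (c + s))) := by gcongr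
    _ = 32 * c ^ s + 8 * ((1 - s) * c ^ s * log (π * (c + s))) := by ring
    _ ≤ 32 * (2 * c) + 8 * (19 * c) := by gcongr
    _ = 216 * c := by ring

lemma abs_scaledStableConst_sub_le {c s t : ℝ} (hc : 1 / 2 ≤ c) (hs : s ∈ Ioo (1 / 2) 1)
    (ht : t ∈ Ioo (1 / 2) 1) :
    |scaledStableConst c s - scaledStableConst c t| ≤ 216 * c * |s - t| := by
  have hderiv : ∀ u ∈ Ioo (1 / 2 : ℝ) 1,
      HasDerivWithinAt (scaledStableConst c) (deriv (scaledStableConst c) u) (Ioo (1 / 2) 1) u :=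
    fun u hu => (hasDerivAt_scaledStableConst (by linarith [hu.2]) (by linarith [hu.1])
      ).differentiableAt.hasDerivAt.hasDerivWithinAt
  have hbound : ∀ u ∈ Ioo (1 / 2 : ℝ) 1, ‖deriv (scaledStableConst c) u‖ ≤ 216 * c :=
    fun u hu => (norm_eq_abs _).trans_le (abs_deriv_scaledStableConst_le hc hu)
  simpa only [norm_eq_abs] using
    (convex_Ioo _ _).norm_image_sub_le_of_norm_hasDerivWithin_le hderiv hbound ht hs

theorem stmt5 :
    ∃ C > 0, ∀ (d : ℕ), 1 ≤ d → ∀ α ∈ Set.Ioo (1 : ℝ) 2, ∀ ϑ ∈ Set.Ioo (1 : ℝ) 2,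
      sphereArea d * |stableConst d α - stableConst d ϑ| ≤ C * d * |α - ϑ| := by
  refine ⟨54, by norm_num, fun d hd α hα ϑ hϑ => ?_⟩
  have hc : (1 : ℝ) / 2 ≤ d / 2 := by gcongr; exact_mod_cast hd
  have hhalf : ∀ β ∈ Ioo (1 : ℝ) 2, β / 2 ∈ Ioo (1 / 2 : ℝ) 1 :=
    fun β hβ => ⟨by linarith [hβ.1], by linarith [hβ.2]⟩
  have hS : 0 ≤ sphereArea d := by unfold sphereArea; positivity
  calc sphereArea d * |stableConst d α - stableConst d ϑ|
      = |scaledStableConst (d / 2) (α / 2) - scaledStableConst (d / 2) (ϑ / 2)| := by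
        rw [← abs_of_nonneg hS, ← abs_mul, mul_sub, sphereArea_mul_stableConst d hα.2,
          sphereArea_mul_stableConst d hϑ.2]
    _ ≤ 216 * (d / 2) * |α / 2 - ϑ / 2| :=
        abs_scaledStableConst_sub_le hc (hhalf α hα) (hhalf ϑ hϑ)
    _ = 54 * d * |α - ϑ| := by
        rw [← sub_div, abs_div, abs_two]; ring
end

section
/- Let α ∈ (0,2) and t > 0, and let μ be a Borel probability measure on ℝ with μ((−∞,0]) = 0 such that ∫ e^{−u·s} μ(ds) = exp( −2^{(α−2)/2}·u^{α/2}·t ) for every u > 0. Then for every r > 0 the integral ∫ s^{−r} μ(ds) is finite and equals (2·Γ(2r/α)/(α·Γ(r)))·2^{(2−α)r/α}·t^{−2r/α}. In particular, for each r > 0 there is a constant C depending only on r such that ∫ s^{−r} μ(ds) ≤ C·t^{−2r/α} for all α ∈ (1,2) and t > 0. -/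
open Real MeasureTheory

open Set ENNReal

/-!
For `s > 0`, `Γ(r) s^{-r} = ∫₀^∞ u^{r-1} e^{-us} du`, so by Tonelli
`Γ(r) E[S^{-r}] = ∫₀^∞ u^{r-1} E[e^{-uS}] du = ∫₀^∞ u^{r-1} e^{-b u^p} du = b^{-r/p} Γ(r/p) / p`,
here with `p = α/2` and `b = 2^{(α-2)/2} t`. For `α ∈ (1,2)` the argument `2r/α` of `Γ` stays in
`[r, 2r]`, where `Γ` is bounded, which gives the uniform constant.
-/

lemma integrable_and_integral_eq_of_lintegral_ofReal_eq {α : Type*} [MeasurableSpace α]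
    {μ : Measure α} {f : α → ℝ} {V : ℝ} (hf : AEStronglyMeasurable f μ) (hf0 : 0 ≤ᵐ[μ] f)
    (hV : 0 ≤ V) (h : ∫⁻ x, ENNReal.ofReal (f x) ∂μ = ENNReal.ofReal V) :
    Integrable f μ ∧ ∫ x, f x ∂μ = V :=
  ⟨⟨hf, (hasFiniteIntegral_iff_ofReal hf0).2 (h ▸ ofReal_lt_top)⟩,
    by rw [integral_eq_lintegral_of_nonneg_ae hf0 hf, h, toReal_ofReal hV]⟩

lemma lintegral_rpow_mul_exp_neg_mul_Ioi {r s : ℝ} (hr : 0 < r) (hs : 0 < s) :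
    ∫⁻ u in Ioi (0 : ℝ), ENNReal.ofReal (u ^ (r - 1) * exp (-(s * u)))
      = ENNReal.ofReal (Gamma r * s ^ (-r)) := by
  have hval := integral_rpow_mul_exp_neg_mul_Ioi hr hs
  have hint : IntegrableOn (fun u : ℝ => u ^ (r - 1) * exp (-(s * u))) (Ioi 0) :=
    Integrable.of_integral_ne_zero <| by
      rw [hval]; exact (mul_pos (rpow_pos_of_pos (by positivity) _) (Gamma_pos_of_pos hr)).ne'
  rw [← ofReal_integral_eq_lintegral_ofReal hint, hval, one_div, inv_rpow hs.le,
    rpow_neg hs.le, mul_comm]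
  exact (ae_restrict_iff' measurableSet_Ioi).2 <| .of_forall fun u (hu : 0 < u) => by positivity

section NegativeMoments

variable {μ : Measure ℝ} {r : ℝ}

lemma lintegral_Gamma_mul_rpow_neg_eq [SFinite μ] (hpos : ∀ᵐ s ∂μ, 0 < s) (hr : 0 < r) :
    ∫⁻ s, ENNReal.ofReal (Gamma r * s ^ (-r)) ∂μ
      = ∫⁻ u in Ioi (0 : ℝ), ENNReal.ofReal (u ^ (r - 1)) *
          ∫⁻ s, ENNReal.ofReal (exp (-(u * s))) ∂μ := by
  have hmeas : Measurable (Function.uncurry fun s u : ℝ =>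
      ENNReal.ofReal (u ^ (r - 1) * exp (-(s * u)))) :=
    Measurable.ennreal_ofReal (by fun_prop)
  calc ∫⁻ s, ENNReal.ofReal (Gamma r * s ^ (-r)) ∂μ
      = ∫⁻ s, (∫⁻ u in Ioi (0 : ℝ), ENNReal.ofReal (u ^ (r - 1) * exp (-(s * u)))) ∂μ := by
        refine lintegral_congr_ae ?_
        filter_upwards [hpos] with s hs
        exact (lintegral_rpow_mul_exp_neg_mul_Ioi hr hs).symm
    _ = ∫⁻ u in Ioi (0 : ℝ), ∫⁻ s, ENNReal.ofReal (u ^ (r - 1) * exp (-(s * u))) ∂μ :=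
        lintegral_lintegral_swap hmeas.aemeasurable
    _ = _ := by
        refine setLIntegral_congr_fun measurableSet_Ioi fun u (hu : 0 < u) => ?_
        simp_rw [ENNReal.ofReal_mul (rpow_nonneg hu.le _), mul_comm _ u]
        exact lintegral_const_mul' _ _ ofReal_ne_top

lemma lintegral_ofReal_exp_neg_mul [IsFiniteMeasure μ] (hpos : ∀ᵐ s ∂μ, 0 < s) {u : ℝ}
    (hu : 0 ≤ u) :
    ∫⁻ s, ENNReal.ofReal (exp (-(u * s))) ∂μ = ENNReal.ofReal (∫ s, exp (-(u * s)) ∂μ) := by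
  have hint : Integrable (fun s => exp (-(u * s))) μ := by
    refine .of_bound (by fun_prop) 1 ?_
    filter_upwards [hpos] with s hs
    rw [norm_of_nonneg (exp_pos _).le, exp_le_one_iff]
    nlinarith
  exact (ofReal_integral_eq_lintegral_ofReal hint (.of_forall fun _ => (exp_pos _).le)).symm

theorem integral_rpow_neg_of_laplace_eq [IsFiniteMeasure μ] (hpos : ∀ᵐ s ∂μ, 0 < s)
    {b p : ℝ} (hb : 0 < b) (hp : 0 < p)
    (hL : ∀ u : ℝ, 0 < u → ∫ s, exp (-(u * s)) ∂μ = exp (-(b * u ^ p))) (hr : 0 < r) :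
    Integrable (fun s : ℝ => s ^ (-r)) μ ∧
      ∫ s, s ^ (-r) ∂μ = b ^ (-(r / p)) * Gamma (r / p) / (p * Gamma r) := by
  have hq : -1 < r - 1 := by linarith
  have hΓ : 0 < Gamma r := Gamma_pos_of_pos hr
  have hlin : ∫⁻ s, ENNReal.ofReal (Gamma r * s ^ (-r)) ∂μ
      = ENNReal.ofReal (b ^ (-(r / p)) * (1 / p) * Gamma (r / p)) := by
    rw [lintegral_Gamma_mul_rpow_neg_eq hpos hr]
    calc ∫⁻ u in Ioi (0 : ℝ), ENNReal.ofReal (u ^ (r - 1)) *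
          ∫⁻ s, ENNReal.ofReal (exp (-(u * s))) ∂μ
        = ∫⁻ u in Ioi (0 : ℝ), ENNReal.ofReal (u ^ (r - 1) * exp (-b * u ^ p)) := by
          refine setLIntegral_congr_fun measurableSet_Ioi fun u (hu : 0 < u) => ?_
          rw [lintegral_ofReal_exp_neg_mul hpos hu.le, hL u hu,
            ENNReal.ofReal_mul (rpow_nonneg hu.le _), neg_mul]
      _ = ENNReal.ofReal (∫ u in Ioi (0 : ℝ), u ^ (r - 1) * exp (-b * u ^ p)) :=
          (ofReal_integral_eq_lintegral_ofReal
            (integrableOn_rpow_mul_exp_neg_mul_rpow hq hp hb)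
            ((ae_restrict_iff' measurableSet_Ioi).2 <|
              .of_forall fun u (hu : 0 < u) => by positivity)).symm
      _ = _ := by
          rw [integral_rpow_mul_exp_neg_mul_rpow hp hq hb, sub_add_cancel, neg_div]
  obtain ⟨hint, hval⟩ := integrable_and_integral_eq_of_lintegral_ofReal_eq (by fun_prop)
    (hpos.mono fun s hs => by positivity)
    (by have := Gamma_pos_of_pos (div_pos hr hp); positivity) hlin
  refine ⟨(integrable_const_mul_iff hΓ.ne'.isUnit _).1 hint, ?_⟩
  rw [integral_const_mul] at hval
  rw [_root_.eq_div_iff (by positivity)]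
  field_simp at hval
  linear_combination hval

end NegativeMoments

lemma stable_rpow_neg_constant_eq {α t r : ℝ} (hα : 0 < α) (ht : 0 < t) :
    ((2 : ℝ) ^ ((α - 2) / 2) * t) ^ (-(r / (α / 2))) * Gamma (r / (α / 2)) /
        (α / 2 * Gamma r)
      = 2 * Gamma (2 * r / α) / (α * Gamma r) * (2 : ℝ) ^ ((2 - α) * r / α) *
          t ^ (-(2 * r / α)) := by
  have hrα : r / (α / 2) = 2 * r / α := by field_simp
  have h2 : ((2 : ℝ) ^ ((α - 2) / 2)) ^ (-(2 * r / α)) = (2 : ℝ) ^ ((2 - α) * r / α) := by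
    rw [← rpow_mul zero_le_two]
    congr 1
    field_simp
    ring
  rw [hrα, mul_rpow (by positivity) ht.le, h2]
  field_simp

theorem integral_rpow_neg_of_stable_laplace {α t r : ℝ} (hα : α ∈ Ioo (0 : ℝ) 2) (ht : 0 < t)
    {μ : Measure ℝ} [IsProbabilityMeasure μ] (hμ0 : μ (Iic 0) = 0)
    (hL : ∀ u : ℝ, 0 < u →
      ∫ s, exp (-(u * s)) ∂μ = exp (-((2 : ℝ) ^ ((α - 2) / 2) * u ^ (α / 2) * t)))
    (hr : 0 < r) :
    Integrable (fun s : ℝ => s ^ (-r)) μ ∧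
      ∫ s, s ^ (-r) ∂μ = 2 * Gamma (2 * r / α) / (α * Gamma r) *
        (2 : ℝ) ^ ((2 - α) * r / α) * t ^ (-(2 * r / α)) := by
  have hpos : ∀ᵐ s ∂μ, 0 < s :=
    (measure_eq_zero_iff_ae_notMem.1 hμ0).mono fun s hs => not_le.1 hs
  rw [← stable_rpow_neg_constant_eq hα.1 ht]
  refine integral_rpow_neg_of_laplace_eq hpos (by positivity) (by linarith [hα.1]) (fun u hu => ?_) hr
  rw [hL u hu, mul_right_comm]

lemma exists_stable_rpow_neg_constant_le {r : ℝ} (hr : 0 < r) :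
    ∃ C > 0, ∀ α ∈ Ioo (1 : ℝ) 2,
      2 * Gamma (2 * r / α) / (α * Gamma r) * (2 : ℝ) ^ ((2 - α) * r / α) ≤ C := by
  have hcont : ContinuousOn Gamma (Icc r (2 * r)) := fun x hx =>
    (differentiableAt_Gamma fun m h => by
      linarith [hx.1, (Nat.cast_nonneg m : (0 : ℝ) ≤ m)]).continuousAt.continuousWithinAt
  obtain ⟨x₀, hx₀, hmax⟩ :=
    isCompact_Icc.exists_isMaxOn (nonempty_Icc.2 (by linarith)) hcont
  have hΓr := Gamma_pos_of_pos hr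
  have hΓx₀ := Gamma_pos_of_pos (hr.trans_le hx₀.1)
  refine ⟨2 * Gamma x₀ / Gamma r * 2 ^ r, by positivity, fun α ⟨hα1, hα2⟩ => ?_⟩
  have hα0 : 0 < α := by linarith
  have hmem : 2 * r / α ∈ Icc r (2 * r) :=
    ⟨by rw [le_div_iff₀ hα0]; nlinarith, by rw [div_le_iff₀ hα0]; nlinarith⟩
  have hGamma : 2 * Gamma (2 * r / α) / (α * Gamma r) ≤ 2 * Gamma x₀ / Gamma r := by
    rw [mul_comm α, ← div_div]
    calc 2 * Gamma (2 * r / α) / Gamma r / α ≤ 2 * Gamma (2 * r / α) / Gamma r :=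
          div_le_self (by have := Gamma_pos_of_pos (hr.trans_le hmem.1); positivity) hα1.le
      _ ≤ 2 * Gamma x₀ / Gamma r := by gcongr; exact hmax hmem
  have hpow : (2 : ℝ) ^ ((2 - α) * r / α) ≤ 2 ^ r :=
    rpow_le_rpow_of_exponent_le one_le_two <| by rw [div_le_iff₀ hα0]; nlinarith
  gcongr

theorem stmt9 :
    (∀ α ∈ Set.Ioo (0 : ℝ) 2, ∀ t : ℝ, 0 < t →
      ∀ μ : Measure ℝ, IsProbabilityMeasure μ → μ (Set.Iic 0) = 0 →
      (∀ u : ℝ, 0 < u →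
        (∫ s, Real.exp (-(u * s)) ∂μ)
          = Real.exp (-((2 : ℝ) ^ ((α - 2)/2) * u ^ (α/2) * t))) →
      ∀ r : ℝ, 0 < r →
        Integrable (fun s : ℝ => s ^ (-r)) μ ∧
        (∫ s, s ^ (-r) ∂μ)
          = (2 * Real.Gamma (2 * r / α) / (α * Real.Gamma r)) *
              (2 : ℝ) ^ ((2 - α) * r / α) * t ^ (-(2 * r / α))) ∧
    (∀ r : ℝ, 0 < r → ∃ C > 0, ∀ α ∈ Set.Ioo (1 : ℝ) 2, ∀ t : ℝ, 0 < t →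
      ∀ μ : Measure ℝ, IsProbabilityMeasure μ → μ (Set.Iic 0) = 0 →
      (∀ u : ℝ, 0 < u →
        (∫ s, Real.exp (-(u * s)) ∂μ)
          = Real.exp (-((2 : ℝ) ^ ((α - 2)/2) * u ^ (α/2) * t))) →
      (∫ s, s ^ (-r) ∂μ) ≤ C * t ^ (-(2 * r / α))) := by
  refine ⟨fun α hα t ht μ _ hμ0 hL r hr =>
    integral_rpow_neg_of_stable_laplace hα ht hμ0 hL hr, fun r hr => ?_⟩
  obtain ⟨C, hC, hbound⟩ := exists_stable_rpow_neg_constant_le hr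
  refine ⟨C, hC, fun α hα t ht μ _ hμ0 hL => ?_⟩
  rw [(integral_rpow_neg_of_stable_laplace ⟨by linarith [hα.1], hα.2⟩ ht hμ0 hL hr).2]
  gcongr
  exact hbound α hα
end

section
/- Let α ∈ (0,2) and t > 0, and let μ be a Borel probability measure on ℝ with μ((−∞,0]) = 0 such that ∫ e^{−u·s} μ(ds) = exp( −2^{(α−2)/2}·u^{α/2}·t ) for every u > 0. Then for every r with 0 < r < α/2 the integral ∫ s^{r} μ(ds) is finite and equals (Γ(1 − 2r/α)/Γ(1 − r))·2^{(α−2)r/α}·t^{2r/α}. -/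
open Real MeasureTheory Set Filter Topology

-- integrability of the key integrand
lemma aux_integrable {w γ p : ℝ} (hw : 0 < w) (hγ : 0 < γ) (hp : 0 < p) (hpγ : p < γ) :
    IntegrableOn (fun u : ℝ => (1 - Real.exp (-(w * u ^ γ))) * u ^ (-p - 1)) (Set.Ioi (0:ℝ)) := by
  have meas : Measurable fun u : ℝ => (1 - Real.exp (-(w * u ^ γ))) * u ^ (-p - 1) := by
    fun_prop
  rw [← Set.Ioc_union_Ioi_eq_Ioi (zero_le_one)]
  apply MeasureTheory.IntegrableOn.union
  · -- on Ioc 0 1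
    apply MeasureTheory.Integrable.mono' (g := fun u : ℝ => w * u ^ (γ - p - 1))
    · exact MeasureTheory.Integrable.const_mul
        ((intervalIntegrable_iff_integrableOn_Ioc_of_le zero_le_one).1
          (intervalIntegral.intervalIntegrable_rpow' (by linarith))) w
    · exact meas.aestronglyMeasurable.restrict
    · filter_upwards [ae_restrict_mem measurableSet_Ioc] with u hu
      have hu0 : 0 < u := hu.1
      have h1 : 0 ≤ 1 - Real.exp (-(w * u ^ γ)) := by
        have : Real.exp (-(w * u ^ γ)) ≤ 1 := by
          apply Real.exp_le_one_iff.2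
          have : 0 ≤ w * u ^ γ := by positivity
          linarith
        linarith
      have h2 : 1 - Real.exp (-(w * u ^ γ)) ≤ w * u ^ γ := by
        have := Real.add_one_le_exp (-(w * u ^ γ))
        linarith
      rw [Real.norm_eq_abs, abs_of_nonneg (by positivity)]
      calc (1 - Real.exp (-(w * u ^ γ))) * u ^ (-p - 1)
          ≤ (w * u ^ γ) * u ^ (-p - 1) := by
            apply mul_le_mul_of_nonneg_right h2 (by positivity)
        _ = w * u ^ (γ - p - 1) := by
            rw [mul_assoc, ← Real.rpow_add hu0]; ring_nf
  · -- on Ioi 1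
    apply MeasureTheory.Integrable.mono' (g := fun u : ℝ => u ^ (-p - 1))
    · exact integrableOn_Ioi_rpow_of_lt (by linarith) one_pos
    · exact meas.aestronglyMeasurable.restrict
    · filter_upwards [ae_restrict_mem measurableSet_Ioi] with u hu
      have hu0 : (0:ℝ) < u := lt_trans one_pos hu
      have h1 : 0 ≤ 1 - Real.exp (-(w * u ^ γ)) := by
        have : Real.exp (-(w * u ^ γ)) ≤ 1 := by
          apply Real.exp_le_one_iff.2
          have : 0 ≤ w * u ^ γ := by positivity
          linarith
        linarith
      have h2 : 1 - Real.exp (-(w * u ^ γ)) ≤ 1 := by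
        have := Real.exp_pos (-(w * u ^ γ)); linarith
      rw [Real.norm_eq_abs, abs_of_nonneg (by positivity)]
      calc (1 - Real.exp (-(w * u ^ γ))) * u ^ (-p - 1)
          ≤ 1 * u ^ (-p - 1) := mul_le_mul_of_nonneg_right h2 (by positivity)
        _ = u ^ (-p - 1) := one_mul _

lemma aux_gamma_integrable {w p : ℝ} (hw : 0 < w) (hp : 0 < p) (hp1 : p < 1) :
    IntegrableOn (fun u : ℝ => Real.exp (-(w * u)) * u ^ (-p)) (Set.Ioi (0:ℝ)) := by
  have meas : Measurable fun u : ℝ => Real.exp (-(w * u)) * u ^ (-p) := by fun_prop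
  rw [← Set.Ioc_union_Ioi_eq_Ioi (zero_le_one)]
  apply MeasureTheory.IntegrableOn.union
  · apply MeasureTheory.Integrable.mono' (g := fun u : ℝ => u ^ (-p))
    · exact (intervalIntegrable_iff_integrableOn_Ioc_of_le zero_le_one).1
        (intervalIntegral.intervalIntegrable_rpow' (by linarith))
    · exact meas.aestronglyMeasurable.restrict
    · filter_upwards [ae_restrict_mem measurableSet_Ioc] with u hu
      have hu0 : 0 < u := hu.1
      rw [Real.norm_eq_abs, abs_of_nonneg (by positivity)]
      calc Real.exp (-(w * u)) * u ^ (-p) ≤ 1 * u ^ (-p) := by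
            apply mul_le_mul_of_nonneg_right _ (by positivity)
            apply Real.exp_le_one_iff.2; nlinarith
        _ = u ^ (-p) := one_mul _
  · apply MeasureTheory.Integrable.mono' (g := fun u : ℝ => Real.exp (-w * u))
    · exact exp_neg_integrableOn_Ioi 1 hw
    · exact meas.aestronglyMeasurable.restrict
    · filter_upwards [ae_restrict_mem measurableSet_Ioi] with u hu
      have hu0 : (0:ℝ) < u := lt_trans one_pos hu
      rw [Real.norm_eq_abs, abs_of_nonneg (by positivity)]
      have : u ^ (-p) ≤ 1 := by
        rw [show (1:ℝ) = u ^ (0:ℝ) by simp]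
        exact Real.rpow_le_rpow_of_exponent_le (le_of_lt hu) (by linarith)
      calc Real.exp (-(w * u)) * u ^ (-p) ≤ Real.exp (-(w * u)) * 1 :=
            mul_le_mul_of_nonneg_left this (Real.exp_pos _).le
        _ = Real.exp (-w * u) := by rw [mul_one, neg_mul]

lemma aux_value_one {w p : ℝ} (hw : 0 < w) (hp : 0 < p) (hp1 : p < 1) :
    ∫ u in Set.Ioi (0:ℝ), (1 - Real.exp (-(w * u))) * u ^ (-p - 1)
      = Real.Gamma (1 - p) / p * w ^ p := by
  set F : ℝ → ℝ := fun u => -((1 - Real.exp (-(w * u))) * u ^ (-p)) / p with hF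
  set f' : ℝ → ℝ := fun u =>
    (1 - Real.exp (-(w * u))) * u ^ (-p - 1) - (w / p) * (Real.exp (-(w * u)) * u ^ (-p)) with hf'
  have hg_int : IntegrableOn (fun u : ℝ => (1 - Real.exp (-(w * u))) * u ^ (-p - 1))
      (Set.Ioi (0:ℝ)) := by
    have := aux_integrable (γ := 1) hw one_pos hp hp1
    simpa using this
  have hΓ_int := aux_gamma_integrable hw hp hp1
  have hf'_int : IntegrableOn f' (Set.Ioi (0:ℝ)) := hg_int.sub (hΓ_int.const_mul _)
  -- derivative
  have hderiv : ∀ u ∈ Set.Ioi (0:ℝ), HasDerivAt F (f' u) u := by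
    intro u hu
    have hu0 : (0:ℝ) < u := hu
    have h1 : HasDerivAt (fun u : ℝ => 1 - Real.exp (-(w * u))) (w * Real.exp (-(w * u))) u := by
      have h0 : HasDerivAt (fun u : ℝ => Real.exp (-(w * u))) (Real.exp (-(w * u)) * (-w)) u := by
        simpa using (((hasDerivAt_id u).const_mul w).neg).exp
      have := h0.const_sub 1
      exact this.congr_deriv (by ring)
    have h2 : HasDerivAt (fun u : ℝ => u ^ (-p)) (-p * u ^ (-p - 1)) u :=
      Real.hasDerivAt_rpow_const (Or.inl hu0.ne')
    have := ((h1.mul h2).neg).div_const p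
    apply HasDerivAt.congr_deriv this
    symm
    rw [hf']
    field_simp
    ring
  -- continuity at 0
  have hcont : ContinuousWithinAt F (Set.Ici (0:ℝ)) 0 := by
    have hF0 : F 0 = 0 := by
      simp [hF, Real.zero_rpow (by linarith : -p ≠ 0)]
    rw [ContinuousWithinAt, hF0, ← Set.Ioi_insert, nhdsWithin_insert, tendsto_sup]
    constructor
    · simpa [hF0] using tendsto_pure_nhds F 0
    · -- limit from the right
      have T1 : Tendsto (fun u : ℝ => (1 - Real.exp (-(w * u))) / u) (𝓝[>] 0) (𝓝 w) := by
        have hD : HasDerivAt (fun u : ℝ => 1 - Real.exp (-(w * u))) w 0 := by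
          have h0 : HasDerivAt (fun u : ℝ => Real.exp (-(w * u))) (Real.exp (-(w * 0)) * (-w)) 0 := by
            simpa using (((hasDerivAt_id 0).const_mul w).neg).exp
          simpa using h0.const_sub 1
        have := hasDerivAt_iff_tendsto_slope.1 hD
        have := this.mono_left (nhdsWithin_mono _ (fun x hx => ne_of_gt hx))
        refine this.congr' ?_
        filter_upwards [self_mem_nhdsWithin] with u hu
        simp [slope_def_field, div_eq_iff (ne_of_gt (show (0:ℝ) < u from hu))]
      have T2 : Tendsto (fun u : ℝ => u ^ (1 - p)) (𝓝[>] 0) (𝓝 0) := by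
        have := (Real.continuousAt_rpow_const 0 (1 - p) (Or.inr (by linarith))).tendsto
        have := this.mono_left (nhdsWithin_le_nhds (s := Set.Ioi (0:ℝ)))
        simpa [Real.zero_rpow (by linarith : 1 - p ≠ 0)] using this
      have T3 : Tendsto (fun u : ℝ => (1 - Real.exp (-(w * u))) * u ^ (-p)) (𝓝[>] 0) (𝓝 0) := by
        have := T1.mul T2
        rw [mul_zero] at this
        refine this.congr' ?_
        filter_upwards [self_mem_nhdsWithin] with u hu
        have hu0 : (0:ℝ) < u := hu
        rw [show u ^ (1 - p) = u * u ^ (-p) by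
          rw [show (1:ℝ) - p = 1 + -p by ring, Real.rpow_add hu0, Real.rpow_one]]
        field_simp
      have := (T3.div_const p).neg
      simpa [hF, neg_div] using this
  -- limit at infinity
  have htop : Tendsto F atTop (𝓝 0) := by
    have T1 : Tendsto (fun u : ℝ => 1 - Real.exp (-(w * u))) atTop (𝓝 (1 - 0)) := by
      apply Filter.Tendsto.const_sub
      exact Real.tendsto_exp_atBot.comp
        (tendsto_neg_atTop_atBot.comp ((tendsto_const_mul_atTop_of_pos hw).2 tendsto_id))
    have T2 : Tendsto (fun u : ℝ => u ^ (-p)) atTop (𝓝 0) := tendsto_rpow_neg_atTop hp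
    have := ((T1.mul T2).div_const p).neg
    simpa [hF, neg_div] using this
  have key := integral_Ioi_of_hasDerivAt_of_tendsto hcont hderiv hf'_int htop
  have hF0 : F 0 = 0 := by
    simp [hF, Real.zero_rpow (by linarith : -p ≠ 0)]
  rw [hF0, sub_zero] at key
  have hsplit : ∫ u in Set.Ioi (0:ℝ), f' u
      = (∫ u in Set.Ioi (0:ℝ), (1 - Real.exp (-(w * u))) * u ^ (-p - 1))
        - (w / p) * ∫ u in Set.Ioi (0:ℝ), Real.exp (-(w * u)) * u ^ (-p) := by
    rw [hf', MeasureTheory.integral_sub hg_int (hΓ_int.const_mul _),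
      MeasureTheory.integral_const_mul]
  have hΓval : ∫ u in Set.Ioi (0:ℝ), Real.exp (-(w * u)) * u ^ (-p)
      = (1 / w) ^ (1 - p) * Real.Gamma (1 - p) := by
    rw [← Real.integral_rpow_mul_exp_neg_mul_Ioi (by linarith : (0:ℝ) < 1 - p) hw]
    apply MeasureTheory.setIntegral_congr_fun measurableSet_Ioi
    intro u hu
    rw [show (1:ℝ) - p - 1 = -p by ring]
    ring
  rw [key, hΓval] at hsplit
  have h1w : (1 / w) ^ (1 - p) = w ^ (p - 1) := by
    rw [one_div, ← Real.rpow_neg_one w, ← Real.rpow_mul hw.le]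
    ring_nf
  rw [h1w] at hsplit
  have hwp : w * w ^ (p - 1) = w ^ p := by
    nth_rewrite 1 [← Real.rpow_one w]
    rw [← Real.rpow_add hw]; ring_nf
  have hfin : w / p * (w ^ (p - 1) * Real.Gamma (1 - p))
      = Real.Gamma (1 - p) / p * w ^ p := by
    rw [← hwp]; field_simp
  linarith


lemma aux_value_beta {w β r : ℝ} (hw : 0 < w) (hβ : 0 < β) (hr : 0 < r) (hrβ : r < β) :
    ∫ u in Set.Ioi (0:ℝ), (1 - Real.exp (-(w * u ^ β))) * u ^ (-r - 1)
      = Real.Gamma (1 - r / β) / r * w ^ (r / β) := by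
  have h1 : 0 < r / β := div_pos hr hβ
  have h2 : r / β < 1 := (div_lt_one hβ).2 hrβ
  have key := integral_comp_rpow_Ioi_of_pos
    (g := fun y : ℝ => (1 / β) * ((1 - Real.exp (-(w * y))) * y ^ (-(r / β) - 1))) hβ
  rw [MeasureTheory.integral_const_mul, aux_value_one hw h1 h2] at key
  have hLHS : (∫ x in Set.Ioi (0:ℝ),
      (β * x ^ (β - 1)) • ((1 / β) * ((1 - Real.exp (-(w * x ^ β))) * (x ^ β) ^ (-(r / β) - 1))))
      = ∫ u in Set.Ioi (0:ℝ), (1 - Real.exp (-(w * u ^ β))) * u ^ (-r - 1) := by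
    apply MeasureTheory.setIntegral_congr_fun measurableSet_Ioi
    intro x hx
    have hx0 : (0:ℝ) < x := hx
    have e1 : (x ^ β) ^ (-(r / β) - 1) = x ^ (β * (-(r / β) - 1)) :=
      (Real.rpow_mul hx0.le _ _).symm
    have e2 : x ^ (β - 1) * x ^ (β * (-(r / β) - 1)) = x ^ (-r - 1) := by
      rw [← Real.rpow_add hx0]
      congr 1
      field_simp
      ring
    simp only [smul_eq_mul]
    rw [e1, ← e2]
    field_simp
  rw [hLHS] at key
  rw [key]
  have hβ' : β ≠ 0 := hβ.ne'
  have hr' : r ≠ 0 := hr.ne'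
  field_simp

theorem stmt10 (α : ℝ) (hα : α ∈ Set.Ioo (0 : ℝ) 2) (t : ℝ) (ht : 0 < t)
    (μ : Measure ℝ) (hprob : IsProbabilityMeasure μ) (hpos : μ (Set.Iic 0) = 0)
    (hlap : ∀ u : ℝ, 0 < u →
      (∫ s, Real.exp (-(u * s)) ∂μ)
        = Real.exp (-((2 : ℝ) ^ ((α - 2)/2) * u ^ (α/2) * t)))
    (r : ℝ) (hr : 0 < r) (hrα : r < α / 2) :
    Integrable (fun s : ℝ => s ^ r) μ ∧
    (∫ s, s ^ r ∂μ)
      = (Real.Gamma (1 - 2 * r / α) / Real.Gamma (1 - r)) *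
          (2 : ℝ) ^ ((α - 2) * r / α) * t ^ (2 * r / α) := by
  obtain ⟨hα0, hα2⟩ := hα
  set β : ℝ := α / 2 with hβdef
  have hβ0 : 0 < β := by positivity
  have hβ1 : β < 1 := by rw [hβdef]; linarith
  set w : ℝ := (2 : ℝ) ^ ((α - 2)/2) * t with hwdef
  have hw : 0 < w := mul_pos (Real.rpow_pos_of_pos two_pos _) ht
  have hrβ : r < β := hrα
  have hr1 : r < 1 := lt_trans hrβ hβ1
  have hΓr : 0 < Real.Gamma (1 - r) := Real.Gamma_pos_of_pos (by linarith)
  have hΓrβ : 0 < Real.Gamma (1 - r / β) := by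
    apply Real.Gamma_pos_of_pos
    have : r / β < 1 := (div_lt_one hβ0).2 hrβ
    linarith
  -- a.e. positivity
  have hae : ∀ᵐ s ∂μ, 0 < s := by
    rw [ae_iff]
    convert hpos using 2
    ext s
    simp [not_lt]
  -- Laplace transform in our normalization
  have hlap' : ∀ u : ℝ, 0 < u →
      (∫ s, Real.exp (-(u * s)) ∂μ) = Real.exp (-(w * u ^ β)) := by
    intro u hu
    rw [hlap u hu]
    congr 1
    rw [hwdef, hβdef]
    ring
  -- integrability of the exponential
  have hexp_int : ∀ u : ℝ, 0 < u → Integrable (fun s => Real.exp (-(u * s))) μ := by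
    intro u hu
    apply MeasureTheory.Integrable.mono' (integrable_const (1 : ℝ))
    · exact (Real.continuous_exp.comp
        ((continuous_const.mul continuous_id).neg)).aestronglyMeasurable
    · filter_upwards [hae] with s hs
      rw [Real.norm_eq_abs, abs_of_nonneg (Real.exp_pos _).le]
      exact Real.exp_le_one_iff.2 (by nlinarith)
  have hlint_exp : ∀ u : ℝ, 0 < u →
      ∫⁻ s, ENNReal.ofReal (Real.exp (-(u * s))) ∂μ
        = ENNReal.ofReal (Real.exp (-(w * u ^ β))) := by
    intro u hu
    rw [← MeasureTheory.ofReal_integral_eq_lintegral_ofReal (hexp_int u hu)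
      (Filter.Eventually.of_forall fun s => (Real.exp_pos _).le), hlap' u hu]
  -- the inner lintegral in s
  have hJ : ∀ u : ℝ, 0 < u →
      ∫⁻ s, ENNReal.ofReal (1 - Real.exp (-(u * s))) ∂μ
        = ENNReal.ofReal (1 - Real.exp (-(w * u ^ β))) := by
    intro u hu
    have heq : ∀ᵐ s ∂μ, ENNReal.ofReal (1 - Real.exp (-(u * s)))
        = 1 - ENNReal.ofReal (Real.exp (-(u * s))) := by
      filter_upwards with s
      rw [ENNReal.ofReal_sub _ (Real.exp_pos _).le, ENNReal.ofReal_one]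
    rw [lintegral_congr_ae heq]
    rw [MeasureTheory.lintegral_sub
      (by fun_prop)
      (by rw [hlint_exp u hu]; exact ENNReal.ofReal_ne_top)
      (by filter_upwards [hae] with s hs
          calc ENNReal.ofReal (Real.exp (-(u * s))) ≤ ENNReal.ofReal 1 :=
                ENNReal.ofReal_le_ofReal (Real.exp_le_one_iff.2 (by nlinarith))
            _ = 1 := ENNReal.ofReal_one)]
    rw [hlint_exp u hu, lintegral_one, measure_univ, ← ENNReal.ofReal_one,
      ← ENNReal.ofReal_sub _ (Real.exp_pos _).le]
  -- pointwise representation of s ^ r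
  have hrep : ∀ s : ℝ, 0 < s →
      ENNReal.ofReal (s ^ r) = ENNReal.ofReal (r / Real.Gamma (1 - r)) *
        ∫⁻ u in Set.Ioi (0:ℝ), ENNReal.ofReal ((1 - Real.exp (-(u * s))) * u ^ (-r - 1)) := by
    intro s hs
    have hint : IntegrableOn (fun u : ℝ => (1 - Real.exp (-(u * s))) * u ^ (-r - 1))
        (Set.Ioi (0:ℝ)) := by
      have := aux_integrable (w := s) (γ := 1) hs one_pos hr hr1
      simpa [mul_comm] using this
    have hval : ∫ u in Set.Ioi (0:ℝ), (1 - Real.exp (-(u * s))) * u ^ (-r - 1)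
        = Real.Gamma (1 - r) / r * s ^ r := by
      rw [← aux_value_one hs hr hr1]
      apply MeasureTheory.setIntegral_congr_fun measurableSet_Ioi
      intro u hu
      show (1 - Real.exp (-(u * s))) * u ^ (-r - 1) = (1 - Real.exp (-(s * u))) * u ^ (-r - 1)
      rw [mul_comm u s]
    have hnn : 0 ≤ᵐ[volume.restrict (Set.Ioi (0:ℝ))]
        fun u => (1 - Real.exp (-(u * s))) * u ^ (-r - 1) := by
      filter_upwards [ae_restrict_mem measurableSet_Ioi] with u hu
      have hu0 : (0:ℝ) < u := hu
      have : Real.exp (-(u * s)) ≤ 1 := Real.exp_le_one_iff.2 (by nlinarith)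
      have h2 : (0:ℝ) ≤ u ^ (-r - 1) := (Real.rpow_pos_of_pos hu0 _).le
      exact mul_nonneg (by linarith) h2
    rw [← MeasureTheory.ofReal_integral_eq_lintegral_ofReal hint hnn, hval,
      ← ENNReal.ofReal_mul (by positivity)]
    congr 1
    field_simp
  -- the main lintegral computation
  have hmain : ∫⁻ s, ENNReal.ofReal (s ^ r) ∂μ
      = ENNReal.ofReal (Real.Gamma (1 - r / β) / Real.Gamma (1 - r) * w ^ (r / β)) := by
    calc ∫⁻ s, ENNReal.ofReal (s ^ r) ∂μ
        = ∫⁻ s, (ENNReal.ofReal (r / Real.Gamma (1 - r)) *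
            ∫⁻ u in Set.Ioi (0:ℝ),
              ENNReal.ofReal ((1 - Real.exp (-(u * s))) * u ^ (-r - 1))) ∂μ := by
          exact lintegral_congr_ae (by filter_upwards [hae] with s hs; exact hrep s hs)
      _ = ENNReal.ofReal (r / Real.Gamma (1 - r)) *
            ∫⁻ s, (∫⁻ u in Set.Ioi (0:ℝ),
              ENNReal.ofReal ((1 - Real.exp (-(u * s))) * u ^ (-r - 1))) ∂μ :=
          lintegral_const_mul' _ _ ENNReal.ofReal_ne_top
      _ = ENNReal.ofReal (r / Real.Gamma (1 - r)) *
            ∫⁻ u in Set.Ioi (0:ℝ), (∫⁻ s,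
              ENNReal.ofReal ((1 - Real.exp (-(u * s))) * u ^ (-r - 1)) ∂μ) := by
          congr 1
          apply MeasureTheory.lintegral_lintegral_swap
          apply Measurable.aemeasurable
          fun_prop
      _ = ENNReal.ofReal (r / Real.Gamma (1 - r)) *
            ∫⁻ u in Set.Ioi (0:ℝ),
              ENNReal.ofReal ((1 - Real.exp (-(w * u ^ β))) * u ^ (-r - 1)) := by
          congr 1
          apply MeasureTheory.setLIntegral_congr_fun measurableSet_Ioi
          intro u hu
          beta_reduce
          have hu0 : (0:ℝ) < u := hu
          have hsplit : ∀ᵐ s ∂μ, ENNReal.ofReal ((1 - Real.exp (-(u * s))) * u ^ (-r - 1))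
              = ENNReal.ofReal (1 - Real.exp (-(u * s))) * ENNReal.ofReal (u ^ (-r - 1)) := by
            filter_upwards [hae] with s hs
            apply ENNReal.ofReal_mul
            have : Real.exp (-(u * s)) ≤ 1 := Real.exp_le_one_iff.2 (by nlinarith)
            linarith
          rw [lintegral_congr_ae hsplit,
            lintegral_mul_const' _ _ ENNReal.ofReal_ne_top, hJ u hu0,
            ← ENNReal.ofReal_mul (by
              have : Real.exp (-(w * u ^ β)) ≤ 1 := Real.exp_le_one_iff.2 (by
                have : (0:ℝ) ≤ w * u ^ β := mul_nonneg hw.le (Real.rpow_nonneg hu0.le _)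
                linarith)
              linarith)]
      _ = ENNReal.ofReal (r / Real.Gamma (1 - r)) *
            ENNReal.ofReal (Real.Gamma (1 - r / β) / r * w ^ (r / β)) := by
          congr 1
          have hnn : 0 ≤ᵐ[volume.restrict (Set.Ioi (0:ℝ))]
              fun u : ℝ => (1 - Real.exp (-(w * u ^ β))) * u ^ (-r - 1) := by
            filter_upwards [ae_restrict_mem measurableSet_Ioi] with u hu
            have hu0 : (0:ℝ) < u := hu
            have h1 : Real.exp (-(w * u ^ β)) ≤ 1 := Real.exp_le_one_iff.2 (by
              have : (0:ℝ) ≤ w * u ^ β := mul_nonneg hw.le (Real.rpow_nonneg hu0.le _)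
              linarith)
            have h2 : (0:ℝ) ≤ u ^ (-r - 1) := (Real.rpow_pos_of_pos hu0 _).le
            exact mul_nonneg (by linarith) h2
          rw [← MeasureTheory.ofReal_integral_eq_lintegral_ofReal
            (aux_integrable hw hβ0 hr hrβ) hnn, aux_value_beta hw hβ0 hr hrβ]
      _ = ENNReal.ofReal (Real.Gamma (1 - r / β) / Real.Gamma (1 - r) * w ^ (r / β)) := by
          rw [← ENNReal.ofReal_mul (by positivity)]
          congr 1
          field_simp
  -- wrap up
  have haesm : AEStronglyMeasurable (fun s : ℝ => s ^ r) μ := by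
    apply Measurable.aestronglyMeasurable
    fun_prop
  have hnonneg_ae : 0 ≤ᵐ[μ] fun s : ℝ => s ^ r := by
    filter_upwards [hae] with s hs
    positivity
  have hint : Integrable (fun s : ℝ => s ^ r) μ := by
    refine ⟨haesm, ?_⟩
    rw [MeasureTheory.hasFiniteIntegral_iff_ofReal hnonneg_ae, hmain]
    exact ENNReal.ofReal_lt_top
  refine ⟨hint, ?_⟩
  rw [MeasureTheory.integral_eq_lintegral_of_nonneg_ae hnonneg_ae haesm, hmain,
    ENNReal.toReal_ofReal (by positivity)]
  -- final arithmetic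
  have hrβ2 : r / β = 2 * r / α := by
    rw [hβdef]
    field_simp
  rw [hrβ2, hwdef,
    Real.mul_rpow (Real.rpow_pos_of_pos two_pos _).le ht.le,
    ← Real.rpow_mul (by norm_num : (0:ℝ) ≤ 2),
    show (α - 2)/2 * (2 * r / α) = (α - 2) * r / α by field_simp]
  ring
end

section
/- For every r ∈ (0,1) and every real s ≥ 0: s^r = (r/Γ(1−r)) · ∫₀^∞ (1 − e^{−u·s})·u^{−1−r} du. -/
/-!
Substituting `u = t / s` pulls out the factor `s ^ r`, reducing the claim to `s = 1`. Integrating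
by parts against `d(-t ^ (-r) / r) = t ^ (-1 - r) dt` (the boundary terms vanish since
`1 - e^{-t} ≤ t` near `0` and `t ^ (-r) → 0` at infinity) turns `∫ (1 - e^{-t}) t ^ (-1 - r) dt`
into `r⁻¹ ∫ e^{-t} t ^ (-r) dt = Γ(1 - r) / r`.
-/

open Real MeasureTheory

open Filter Set Topology

theorem integral_comp_mul_right_mul_rpow_Ioi (g : ℝ → ℝ) (a : ℝ) {s : ℝ} (hs : 0 < s) :
    ∫ u in Ioi (0 : ℝ), g (u * s) * u ^ a = s ^ (-a - 1) * ∫ t in Ioi (0 : ℝ), g t * t ^ a := by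
  have hrescale : ∀ u ∈ Ioi (0 : ℝ), g (u * s) * u ^ a = s ^ (-a) * (g (u * s) * (u * s) ^ a) := by
    intro u hu
    rw [mul_rpow (le_of_lt hu) hs.le, rpow_neg hs.le]
    field_simp
  rw [setIntegral_congr_fun measurableSet_Ioi hrescale, integral_const_mul,
    integral_comp_mul_right_Ioi (fun t => g t * t ^ a) 0 hs, zero_mul, smul_eq_mul, ← mul_assoc,
    ← rpow_neg_one s, ← rpow_add hs, ← sub_eq_add_neg]

theorem one_sub_exp_neg_nonneg {t : ℝ} (ht : 0 ≤ t) : 0 ≤ 1 - exp (-t) := by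
  simpa using exp_le_one_iff.2 (neg_nonpos.2 ht)

theorem one_sub_exp_neg_mul_rpow_nonneg {t : ℝ} (ht : 0 ≤ t) (a : ℝ) :
    0 ≤ (1 - exp (-t)) * t ^ a :=
  mul_nonneg (one_sub_exp_neg_nonneg ht) (rpow_nonneg ht a)

theorem one_sub_exp_neg_mul_rpow_le {t : ℝ} (ht : 0 < t) (a : ℝ) :
    (1 - exp (-t)) * t ^ a ≤ t ^ (a + 1) := by
  calc (1 - exp (-t)) * t ^ a ≤ t * t ^ a :=
        mul_le_mul_of_nonneg_right (by linarith [one_sub_le_exp_neg t]) (rpow_nonneg ht.le a)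
    _ = t ^ (a + 1) := by rw [rpow_add_one ht.ne', mul_comm]

section

variable {r : ℝ}

theorem integrableOn_one_sub_exp_neg_mul_rpow (hr0 : 0 < r) (hr1 : r < 1) :
    IntegrableOn (fun t => (1 - exp (-t)) * t ^ (-1 - r)) (Ioi 0) := by
  have hmeas : AEStronglyMeasurable (fun t : ℝ => (1 - exp (-t)) * t ^ (-1 - r))
      (volume.restrict (Ioi 0)) := by
    refine ContinuousOn.aestronglyMeasurable (fun t ht => ?_) measurableSet_Ioi
    exact ((continuous_const.sub continuous_neg.rexp).continuousAt.mul
      (continuousAt_rpow_const t _ (Or.inl (ne_of_gt ht)))).continuousWithinAt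
  rw [← Ioc_union_Ioi_eq_Ioi zero_le_one]
  refine IntegrableOn.union ?_ ?_
  · have hbound : IntegrableOn (fun t : ℝ => t ^ (-1 - r + 1)) (Ioc 0 1) :=
      (intervalIntegrable_iff_integrableOn_Ioc_of_le zero_le_one).1
        (intervalIntegral.intervalIntegrable_rpow' (by linarith))
    refine hbound.integrable.mono'
      (hmeas.mono_measure (Measure.restrict_mono Ioc_subset_Ioi_self le_rfl)) ?_
    filter_upwards [ae_restrict_mem measurableSet_Ioc] with t ht
    rw [norm_of_nonneg (one_sub_exp_neg_mul_rpow_nonneg ht.1.le _)]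
    exact one_sub_exp_neg_mul_rpow_le ht.1 _
  · refine (integrableOn_Ioi_rpow_of_lt (a := -1 - r) (by linarith) zero_lt_one).integrable.mono'
      (hmeas.mono_measure (Measure.restrict_mono (Ioi_subset_Ioi zero_le_one) le_rfl)) ?_
    filter_upwards [ae_restrict_mem measurableSet_Ioi] with t ht
    have ht0 : 0 < t := zero_lt_one.trans ht
    rw [norm_of_nonneg (one_sub_exp_neg_mul_rpow_nonneg ht0.le _)]
    exact mul_le_of_le_one_left (rpow_nonneg ht0.le _) (by linarith [exp_pos (-t)])

theorem tendsto_one_sub_exp_neg_mul_rpow_nhdsGT_zero (hr1 : r < 1) :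
    Tendsto (fun t => (1 - exp (-t)) * t ^ (-r)) (𝓝[>] 0) (𝓝 0) := by
  have hpow : Tendsto (fun t : ℝ => t ^ (-r + 1)) (𝓝[>] 0) (𝓝 0) := by
    have := ((continuousAt_rpow_const 0 (-r + 1) (Or.inr (by linarith))).continuousWithinAt
      (s := Ioi 0)).tendsto
    rwa [zero_rpow (by linarith)] at this
  refine squeeze_zero' ?_ ?_ hpow
  · filter_upwards [self_mem_nhdsWithin] with t (ht : 0 < t)
    exact one_sub_exp_neg_mul_rpow_nonneg ht.le _
  · filter_upwards [self_mem_nhdsWithin] with t (ht : 0 < t)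
    exact one_sub_exp_neg_mul_rpow_le ht _

theorem integral_one_sub_exp_neg_mul_rpow (hr0 : 0 < r) (hr1 : r < 1) :
    ∫ t in Ioi (0 : ℝ), (1 - exp (-t)) * t ^ (-1 - r) = Gamma (1 - r) / r := by
  have hu : ∀ t ∈ Ioi (0 : ℝ), HasDerivAt (fun t => 1 - exp (-t)) (exp (-t)) t := fun t _ => by
    simpa using (hasDerivAt_neg t).exp.const_sub 1
  have hv : ∀ t ∈ Ioi (0 : ℝ), HasDerivAt (fun t => -t ^ (-r) / r) (t ^ (-1 - r)) t := by
    intro t ht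
    refine ((hasDerivAt_rpow_const (p := -r) (Or.inl (ne_of_gt ht))).neg.div_const r).congr_deriv ?_
    rw [show -r - 1 = -1 - r by ring]
    field_simp
  have h_zero : Tendsto (fun t => (1 - exp (-t)) * (-t ^ (-r) / r)) (𝓝[>] 0) (𝓝 0) := by
    simpa [mul_neg, neg_div, mul_div_assoc] using
      ((tendsto_one_sub_exp_neg_mul_rpow_nhdsGT_zero hr1).div_const r).neg
  have h_infty : Tendsto (fun t => (1 - exp (-t)) * (-t ^ (-r) / r)) atTop (𝓝 0) := by
    have h1 : Tendsto (fun t : ℝ => 1 - exp (-t)) atTop (𝓝 1) := by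
      simpa using tendsto_exp_neg_atTop_nhds_zero.const_sub 1
    simpa using h1.mul ((tendsto_rpow_neg_atTop hr0).neg.div_const r)
  have hu'v : IntegrableOn (fun t => exp (-t) * (-t ^ (-r) / r)) (Ioi 0) := by
    refine IntegrableOn.congr_fun ((GammaIntegral_convergent (s := 1 - r) (by linarith)).div_const
      (-r)) (fun t _ => ?_) measurableSet_Ioi
    ring_nf
  rw [integral_Ioi_mul_deriv_eq_deriv_mul hu hv (integrableOn_one_sub_exp_neg_mul_rpow hr0 hr1)
    hu'v h_zero h_infty, Gamma_eq_integral (by linarith), ← integral_div, sub_self, zero_sub,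
    ← integral_neg]
  refine setIntegral_congr_fun measurableSet_Ioi (fun t _ => ?_)
  ring_nf

end

theorem stmt11 (r : ℝ) (hr : r ∈ Set.Ioo (0 : ℝ) 1) (s : ℝ) (hs : 0 ≤ s) :
    s ^ r = (r / Real.Gamma (1 - r)) *
      ∫ u in Set.Ioi (0 : ℝ), (1 - Real.exp (-(u * s))) * u ^ (-1 - r) := by
  obtain ⟨hr0, hr1⟩ := hr
  rcases hs.eq_or_lt with rfl | hs
  · simp [zero_rpow hr0.ne']
  rw [integral_comp_mul_right_mul_rpow_Ioi (fun t => 1 - exp (-t)) _ hs,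
    integral_one_sub_exp_neg_mul_rpow hr0 hr1]
  have hΓ : Gamma (1 - r) ≠ 0 := (Gamma_pos_of_pos (by linarith)).ne'
  field_simp
  ring_nf
end

section
/- Let d ≥ 1 be an integer, ε > 0 and q ∈ [1,2], and define F : ℝ^d → ℝ by F(x) := (ε² + ‖x‖²)^{q/2}. Then F is twice continuously differentiable and for all x, y ∈ ℝ^d: (i) ‖∇F(x)‖ ≤ q·(ε² + ‖x‖²)^{(q−1)/2}; (ii) the Hessian quadratic form satisfies ⟨∇²F(x)·y, y⟩ ≤ q·(ε² + ‖x‖²)^{(q−2)/2}·‖y‖². -/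
/-!
With `g x = ε² + ‖x‖²` and `p = q / 2`, the chain rule gives `∇(g ^ p) x = 2p g^(p-1) x`, whose
norm is at most `2p g^(p-1/2)` because `‖x‖ ≤ g^(1/2)`. Differentiating once more,
`D²(g ^ p) x (y, y) = 2p g^(p-1) ‖y‖² + 4p(p-1) g^(p-2) ⟪x, y⟫²`, and for `0 ≤ p ≤ 1` the
second term is nonpositive.
-/

open Real

section
variable {E : Type*} [NormedAddCommGroup E] {ε : ℝ}

lemma sq_add_norm_sq_pos (hε : ε ≠ 0) (x : E) : 0 < ε ^ 2 + ‖x‖ ^ 2 := by positivity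

lemma norm_le_sq_add_norm_sq_rpow_half (x : E) : ‖x‖ ≤ (ε ^ 2 + ‖x‖ ^ 2) ^ (1 / 2 : ℝ) := by
  rw [← sqrt_eq_rpow]
  exact le_sqrt_of_sq_le (le_add_of_nonneg_left (sq_nonneg ε))

variable [InnerProductSpace ℝ E]

lemma contDiff_sq_add_norm_sq_rpow (hε : ε ≠ 0) (p : ℝ) {n : WithTop ℕ∞} :
    ContDiff ℝ n fun x : E => (ε ^ 2 + ‖x‖ ^ 2) ^ p :=
  (contDiff_const.add (contDiff_norm_sq ℝ)).rpow_const_of_ne fun x => (sq_add_norm_sq_pos hε x).ne'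

lemma hasFDerivAt_sq_add_norm_sq_rpow (hε : ε ≠ 0) (p : ℝ) (x : E) :
    HasFDerivAt (fun x : E => (ε ^ 2 + ‖x‖ ^ 2) ^ p)
      ((2 * p * (ε ^ 2 + ‖x‖ ^ 2) ^ (p - 1)) • innerSL ℝ x) x := by
  have h := ((hasStrictFDerivAt_norm_sq x).hasFDerivAt.const_add (ε ^ 2)).rpow_const (p := p)
    (Or.inl (sq_add_norm_sq_pos hε x).ne')
  refine h.congr_fderiv ?_
  ext y
  simp only [smul_apply, smul_eq_mul, nsmul_eq_mul]
  ring

lemma fderiv_sq_add_norm_sq_rpow (hε : ε ≠ 0) (p : ℝ) :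
    fderiv ℝ (fun x : E => (ε ^ 2 + ‖x‖ ^ 2) ^ p) =
      fun x => (2 * p * (ε ^ 2 + ‖x‖ ^ 2) ^ (p - 1)) • innerSL ℝ x :=
  funext fun x => (hasFDerivAt_sq_add_norm_sq_rpow hε p x).fderiv

lemma norm_fderiv_sq_add_norm_sq_rpow_le (hε : ε ≠ 0) {p : ℝ} (hp : 0 ≤ p) (x : E) :
    ‖fderiv ℝ (fun x : E => (ε ^ 2 + ‖x‖ ^ 2) ^ p) x‖ ≤
      2 * p * (ε ^ 2 + ‖x‖ ^ 2) ^ (p - 1 / 2) := by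
  have hg := sq_add_norm_sq_pos hε x
  have hc : 0 ≤ 2 * p * (ε ^ 2 + ‖x‖ ^ 2) ^ (p - 1) := by positivity
  rw [fderiv_sq_add_norm_sq_rpow hε, norm_smul, innerSL_apply_norm, norm_of_nonneg hc]
  calc 2 * p * (ε ^ 2 + ‖x‖ ^ 2) ^ (p - 1) * ‖x‖
      ≤ 2 * p * (ε ^ 2 + ‖x‖ ^ 2) ^ (p - 1) * (ε ^ 2 + ‖x‖ ^ 2) ^ (1 / 2 : ℝ) :=
        mul_le_mul_of_nonneg_left (norm_le_sq_add_norm_sq_rpow_half x) hc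
    _ = 2 * p * (ε ^ 2 + ‖x‖ ^ 2) ^ (p - 1 / 2) := by
        rw [mul_assoc, ← rpow_add hg, show p - 1 + 1 / 2 = p - 1 / 2 by ring]

lemma iteratedFDeriv_two_sq_add_norm_sq_rpow (hε : ε ≠ 0) (p : ℝ) (x y : E) :
    iteratedFDeriv ℝ 2 (fun x : E => (ε ^ 2 + ‖x‖ ^ 2) ^ p) x ![y, y] =
      2 * p * (ε ^ 2 + ‖x‖ ^ 2) ^ (p - 1) * ‖y‖ ^ 2 +
        4 * p * (p - 1) * (ε ^ 2 + ‖x‖ ^ 2) ^ (p - 2) * inner ℝ x y ^ 2 := by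
  have hcoeff := (hasFDerivAt_sq_add_norm_sq_rpow hε (p - 1) x).const_mul (2 * p)
  have hderiv : HasFDerivAt (fun x : E => (2 * p * (ε ^ 2 + ‖x‖ ^ 2) ^ (p - 1)) • innerSL ℝ x) _ x :=
    hcoeff.smul (innerSL ℝ).hasFDerivAt
  -- `innerSL_apply_apply` is stated for the conjugate-linear coercion of `innerSL`, not this one.
  have hyy : (innerSL ℝ : E →L[ℝ] E →L[ℝ] ℝ) y y = ‖y‖ ^ 2 := real_inner_self_eq_norm_sq y
  rw [iteratedFDeriv_two_apply, fderiv_sq_add_norm_sq_rpow hε, hderiv.fderiv]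
  simp only [add_apply, smul_apply, ContinuousLinearMap.smulRight_apply, Matrix.cons_val_zero,
    Matrix.cons_val_one, innerSL_apply_apply, smul_eq_mul, hyy]
  ring_nf

lemma iteratedFDeriv_two_sq_add_norm_sq_rpow_le (hε : ε ≠ 0) {p : ℝ} (hp₀ : 0 ≤ p)
    (hp₁ : p ≤ 1) (x y : E) :
    iteratedFDeriv ℝ 2 (fun x : E => (ε ^ 2 + ‖x‖ ^ 2) ^ p) x ![y, y] ≤
      2 * p * (ε ^ 2 + ‖x‖ ^ 2) ^ (p - 1) * ‖y‖ ^ 2 := by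
  have hg := sq_add_norm_sq_pos hε x
  have hcross : 4 * p * (p - 1) * (ε ^ 2 + ‖x‖ ^ 2) ^ (p - 2) * inner ℝ x y ^ 2 ≤ 0 :=
    mul_nonpos_of_nonpos_of_nonneg
      (mul_nonpos_of_nonpos_of_nonneg (by nlinarith) (rpow_nonneg hg.le _)) (sq_nonneg _)
  rw [iteratedFDeriv_two_sq_add_norm_sq_rpow hε]
  linarith

end

theorem stmt12_general (d : ℕ) (ε : ℝ) (hε : 0 < ε) (q : ℝ) (hq : q ∈ Set.Icc (1 : ℝ) 2) :
    ContDiff ℝ 2 (fun x : EuclideanSpace ℝ (Fin d) => (ε ^ 2 + ‖x‖ ^ 2) ^ (q / 2)) ∧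
    (∀ x : EuclideanSpace ℝ (Fin d),
      ‖fderiv ℝ (fun x : EuclideanSpace ℝ (Fin d) => (ε ^ 2 + ‖x‖ ^ 2) ^ (q / 2)) x‖
        ≤ q * (ε ^ 2 + ‖x‖ ^ 2) ^ ((q - 1) / 2)) ∧
    (∀ x y : EuclideanSpace ℝ (Fin d),
      iteratedFDeriv ℝ 2 (fun x : EuclideanSpace ℝ (Fin d) => (ε ^ 2 + ‖x‖ ^ 2) ^ (q / 2)) x ![y, y]
        ≤ q * (ε ^ 2 + ‖x‖ ^ 2) ^ ((q - 2) / 2) * ‖y‖ ^ 2) := by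
  obtain ⟨hq₁, hq₂⟩ := hq
  have hp₀ : 0 ≤ q / 2 := by linarith
  have hp₁ : q / 2 ≤ 1 := by linarith
  have h2p : 2 * (q / 2) = q := by ring
  refine ⟨contDiff_sq_add_norm_sq_rpow hε.ne' _, fun x => ?_, fun x y => ?_⟩
  · have h := norm_fderiv_sq_add_norm_sq_rpow_le hε.ne' hp₀ x
    rwa [h2p, show q / 2 - 1 / 2 = (q - 1) / 2 by ring] at h
  · have h := iteratedFDeriv_two_sq_add_norm_sq_rpow_le hε.ne' hp₀ hp₁ x y
    rwa [h2p, show q / 2 - 1 = (q - 2) / 2 by ring] at h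

theorem stmt12 (d : ℕ) (hd : 1 ≤ d) (ε : ℝ) (hε : 0 < ε) (q : ℝ) (hq : q ∈ Set.Icc (1 : ℝ) 2) :
    ContDiff ℝ 2 (fun x : EuclideanSpace ℝ (Fin d) => (ε ^ 2 + ‖x‖ ^ 2) ^ (q / 2)) ∧
    (∀ x : EuclideanSpace ℝ (Fin d),
      ‖fderiv ℝ (fun x : EuclideanSpace ℝ (Fin d) => (ε ^ 2 + ‖x‖ ^ 2) ^ (q / 2)) x‖
        ≤ q * (ε ^ 2 + ‖x‖ ^ 2) ^ ((q - 1) / 2)) ∧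
    (∀ x y : EuclideanSpace ℝ (Fin d),
      iteratedFDeriv ℝ 2 (fun x : EuclideanSpace ℝ (Fin d) => (ε ^ 2 + ‖x‖ ^ 2) ^ (q / 2)) x ![y, y]
        ≤ q * (ε ^ 2 + ‖x‖ ^ 2) ^ ((q - 2) / 2) * ‖y‖ ^ 2) :=
  stmt12_general d ε hε q hq
end
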